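/- arXiv:1810.07801 — 5 statements merged into one kernel-verified Lean document; each statement's English description precedes it below -/
import Mathlib

section
/- Under the three-tier association model, the probability that the user associates with the small-cell tier equals A_s = ( 1 − exp(−π·λ_s·(h_m²·P_sm − h_s²)) ) + λ_s/(λ_s + λ_m·P_ms) · ( exp(−π·P_sm·h_m²·(λ_s + λ_m·P_ms) + π·(λ_s·h_s² + λ_m·h_m²)) − exp(−π·h_v²·P_sv·(λ_s + λ_m·P_ms) + π·(λ_s·h_s² + λ_m·h_m²)) ) + λ_s/(λ_s + λ_m·P_ms + λ_v·P_vs) · exp(−π·P_mv·h_v²·(λ_m + λ_s·P_sm + λ_v·P_vm) + π·(λ_m·h_m² + λ_s·h_s² + λ_v·h_v²)). -/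
/-!
The distance `Z_k` to the nearest tier-`k` BS has density `2πλ_k x exp(-πλ_k (x² - h_k²))` on
`[h_k, ∞)`. Since all distances are positive, the association event is
`{√P_ms Z_s < Z_m, √P_vs Z_s < Z_v}`, and by independence its probability is
`∫ f_s(x) F̄_m(√P_ms x) F̄_v(√P_vs x) dx` with `F̄_k` the survival functions. The breakpoints
`h_s ≤ √P_sm h_m ≤ √P_sv h_v` cut this integral into three pieces on each of which the
integrand is a constant multiple of `x exp(-π c x²)`, integrated in closed form.
-/

open MeasureTheory ProbabilityTheory Real Set Filter Topology
open scoped ENNReal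

lemma hasDerivAt_neg_exp_neg_mul_sq_div {c : ℝ} (hc : c ≠ 0) (x : ℝ) :
    HasDerivAt (fun x => -(exp (-c * x ^ 2) / (2 * c))) (x * exp (-c * x ^ 2)) x := by
  refine ((((hasDerivAt_pow 2 x).const_mul (-c)).exp).div_const (2 * c)).neg.congr_deriv ?_
  field_simp
  ring

lemma integral_Ioc_mul_exp_neg_mul_sq {c : ℝ} (hc : c ≠ 0) {a b : ℝ} (hab : a ≤ b) :
    ∫ x in Ioc a b, x * exp (-c * x ^ 2) = (exp (-c * a ^ 2) - exp (-c * b ^ 2)) / (2 * c) := by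
  rw [← intervalIntegral.integral_of_le hab, intervalIntegral.integral_eq_sub_of_hasDerivAt
    (fun x _ => hasDerivAt_neg_exp_neg_mul_sq_div hc x)
    ((by fun_prop : Continuous _).intervalIntegrable _ _)]
  ring

lemma integral_Ioi_mul_exp_neg_mul_sq {c : ℝ} (hc : 0 < c) (a : ℝ) :
    ∫ x in Ioi a, x * exp (-c * x ^ 2) = exp (-c * a ^ 2) / (2 * c) := by
  have hlim : Tendsto (fun x : ℝ => -(exp (-c * x ^ 2) / (2 * c))) atTop (𝓝 0) := by
    have := ((tendsto_pow_atTop two_ne_zero).const_mul_atTop_of_neg (neg_lt_zero.mpr hc))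
    simpa using ((tendsto_exp_atBot.comp this).div_const (2 * c)).neg
  rw [integral_Ioi_of_hasDerivAt_of_tendsto (by fun_prop : Continuous _).continuousWithinAt
    (fun x _ => hasDerivAt_neg_exp_neg_mul_sq_div hc.ne' x)
    (integrable_mul_exp_neg_mul_sq hc).integrableOn hlim]
  ring

lemma two_pi_mul_exp_eq (l c K x : ℝ) :
    2 * π * l * x * exp (-(π * c * x ^ 2) + K) =
      2 * π * l * exp K * (x * exp (-(π * c) * x ^ 2)) := by
  rw [exp_add, neg_mul]
  ring

lemma integral_Ioc_two_pi_mul_exp {c : ℝ} (hc : c ≠ 0) (l K : ℝ) {a b : ℝ} (hab : a ≤ b) :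
    ∫ x in Ioc a b, 2 * π * l * x * exp (-(π * c * x ^ 2) + K) =
      l / c * (exp (-(π * c * a ^ 2) + K) - exp (-(π * c * b ^ 2) + K)) := by
  simp_rw [two_pi_mul_exp_eq, integral_const_mul,
    integral_Ioc_mul_exp_neg_mul_sq (mul_ne_zero pi_ne_zero hc) hab, exp_add, neg_mul]
  field_simp

lemma integral_Ioi_two_pi_mul_exp {c : ℝ} (hc : 0 < c) (l K a : ℝ) :
    ∫ x in Ioi a, 2 * π * l * x * exp (-(π * c * x ^ 2) + K) =
      l / c * exp (-(π * c * a ^ 2) + K) := by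
  simp_rw [two_pi_mul_exp_eq, integral_const_mul,
    integral_Ioi_mul_exp_neg_mul_sq (mul_pos pi_pos hc), exp_add, neg_mul]
  field_simp

/-- For `l = λ_k` and `h = h_k`, `tierSurv l h x = P[Z_k > x]` and `tierPDF l h` is the density
of `Z_k`. -/
noncomputable def tierSurv (l h x : ℝ) : ℝ :=
  if x < h then 1 else exp (-(π * l * (x ^ 2 - h ^ 2)))

noncomputable def tierPDF (l h : ℝ) : ℝ → ℝ :=
  (Ici h).indicator fun x => 2 * π * l * x * exp (-(π * l * (x ^ 2 - h ^ 2)))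

section Tier

variable {l h x : ℝ}

lemma tierSurv_of_le (hx : x ≤ h) : tierSurv l h x = 1 := by
  rcases hx.lt_or_eq with hx | rfl <;> simp [tierSurv, *]

lemma tierSurv_of_ge (hx : h ≤ x) : tierSurv l h x = exp (-(π * l * x ^ 2) + π * l * h ^ 2) := by
  rw [tierSurv, if_neg hx.not_gt]
  ring_nf

lemma tierSurv_nonneg : 0 ≤ tierSurv l h x := by
  unfold tierSurv; split_ifs <;> positivity

lemma tierSurv_le_one (hl : 0 ≤ l) (hh : 0 ≤ h) : tierSurv l h x ≤ 1 := by
  unfold tierSurv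
  split_ifs with hx
  · exact le_rfl
  · refine exp_le_one_iff.mpr (neg_nonpos.mpr (mul_nonneg (by positivity) ?_))
    nlinarith

lemma ofReal_tierSurv :
    ENNReal.ofReal (tierSurv l h x) =
      if x < h then 1 else ENNReal.ofReal (exp (-(π * l * (x ^ 2 - h ^ 2)))) := by
  unfold tierSurv; split_ifs <;> simp

lemma measurable_tierSurv : Measurable (tierSurv l h) :=
  Measurable.ite measurableSet_Iio measurable_const (by fun_prop)

lemma tierPDF_of_ge (hx : h ≤ x) :
    tierPDF l h x = 2 * π * l * x * exp (-(π * l * x ^ 2) + π * l * h ^ 2) := by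
  rw [tierPDF, indicator_of_mem (mem_Ici.mpr hx)]
  ring_nf

lemma tierPDF_of_lt (hx : x < h) : tierPDF l h x = 0 :=
  indicator_of_notMem (notMem_Ici.mpr hx) _

lemma tierPDF_nonneg (hl : 0 ≤ l) (hh : 0 ≤ h) : 0 ≤ tierPDF l h x := by
  unfold tierPDF
  exact indicator_nonneg (fun x hx => by have : 0 ≤ x := hh.trans hx; positivity) _

lemma measurable_tierPDF : Measurable (tierPDF l h) :=
  Measurable.indicator (by fun_prop) measurableSet_Ici

lemma integrable_tierPDF (hl : 0 < l) : Integrable (tierPDF l h) := by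
  refine (integrable_indicator_iff measurableSet_Ici).mpr (Integrable.integrableOn ?_)
  have := ((integrable_mul_exp_neg_mul_sq (mul_pos pi_pos hl)).const_mul
    (2 * π * l * exp (π * l * h ^ 2)))
  refine this.congr (ae_of_all _ fun x => ?_)
  dsimp only
  rw [show -(π * l * (x ^ 2 - h ^ 2)) = -(π * l) * x ^ 2 + π * l * h ^ 2 by ring, exp_add]
  ring

end Tier

section Law

variable {l h : ℝ}

lemma withDensity_tierPDF_apply {s : Set ℝ} (hs : MeasurableSet s) :
    volume.withDensity (fun x => ENNReal.ofReal (tierPDF l h x)) s =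
      ∫⁻ x in Ici h ∩ s, ENNReal.ofReal (tierPDF l h x) := by
  have hsupp : (Ici h).indicator (fun x => ENNReal.ofReal (tierPDF l h x)) =
      fun x => ENNReal.ofReal (tierPDF l h x) :=
    indicator_eq_self.mpr fun x hx => by_contra fun hxh => hx <| by
      simp only [tierPDF_of_lt (not_le.mp hxh), ENNReal.ofReal_zero]
  rw [withDensity_apply _ hs, ← Measure.restrict_restrict measurableSet_Ici,
    ← lintegral_indicator measurableSet_Ici, hsupp]

lemma lintegral_Ioi_tierPDF (hl : 0 < l) (hh : 0 ≤ h) {b : ℝ} (hb : h ≤ b) :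
    ∫⁻ x in Ioi b, ENNReal.ofReal (tierPDF l h x) = ENNReal.ofReal (tierSurv l h b) := by
  rw [← ofReal_integral_eq_lintegral_ofReal (integrable_tierPDF hl).integrableOn
      (ae_of_all _ fun _ => tierPDF_nonneg hl.le hh),
    setIntegral_congr_fun measurableSet_Ioi fun x hx => tierPDF_of_ge (hb.trans hx.le),
    integral_Ioi_two_pi_mul_exp hl, div_self hl.ne', one_mul, tierSurv_of_ge hb]

lemma withDensity_tierPDF_Ioi (hl : 0 < l) (hh : 0 ≤ h) (a : ℝ) :
    volume.withDensity (fun x => ENNReal.ofReal (tierPDF l h x)) (Ioi a) =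
      ENNReal.ofReal (tierSurv l h a) := by
  rw [withDensity_tierPDF_apply measurableSet_Ioi]
  rcases lt_or_ge a h with ha | ha
  · rw [inter_eq_left.mpr (Ici_subset_Ioi.mpr ha), ← restrict_Ioi_eq_restrict_Ici,
      lintegral_Ioi_tierPDF hl hh le_rfl, tierSurv_of_le ha.le, tierSurv_of_le le_rfl]
  · rw [inter_eq_right.mpr (Ioi_subset_Ici ha), lintegral_Ioi_tierPDF hl hh ha]

lemma isProbabilityMeasure_withDensity_tierPDF (hl : 0 < l) (hh : 0 ≤ h) :
    IsProbabilityMeasure (volume.withDensity fun x => ENNReal.ofReal (tierPDF l h x)) := by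
  constructor
  rw [withDensity_tierPDF_apply MeasurableSet.univ, inter_univ, ← restrict_Ioi_eq_restrict_Ici,
    lintegral_Ioi_tierPDF hl hh le_rfl, tierSurv_of_le le_rfl, ENNReal.ofReal_one]

variable {Ω : Type*} [MeasurableSpace Ω] {μ : Measure Ω} [IsProbabilityMeasure μ] {Z : Ω → ℝ}

lemma map_eq_withDensity_tierPDF (hZ : Measurable Z) (hl : 0 < l) (hh : 0 ≤ h)
    (hZ_surv : ∀ x, μ {ω | Z ω > x} = ENNReal.ofReal (tierSurv l h x)) :
    μ.map Z = volume.withDensity (fun x => ENNReal.ofReal (tierPDF l h x)) := by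
  have := isProbabilityMeasure_withDensity_tierPDF hl hh
  have := Measure.isProbabilityMeasure_map (μ := μ) hZ.aemeasurable
  refine Measure.ext_of_Iic _ _ fun a => ?_
  rw [← compl_Ioi, prob_compl_eq_one_sub measurableSet_Ioi,
    prob_compl_eq_one_sub measurableSet_Ioi, Measure.map_apply hZ measurableSet_Ioi,
    withDensity_tierPDF_Ioi hl hh]
  exact congrArg (1 - ·) (hZ_surv a)

lemma ae_le_of_tierSurv (hZ : Measurable Z) (hl : 0 < l) (hh : 0 ≤ h)
    (hZ_surv : ∀ x, μ {ω | Z ω > x} = ENNReal.ofReal (tierSurv l h x)) :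
    ∀ᵐ ω ∂μ, h ≤ Z ω := by
  have hnull : μ (Z ⁻¹' Iio h) = 0 := by
    rw [← Measure.map_apply hZ measurableSet_Iio, map_eq_withDensity_tierPDF hZ hl hh hZ_surv,
      withDensity_tierPDF_apply measurableSet_Iio, Ici_inter_Iio, Ico_self, Measure.restrict_empty,
      lintegral_zero_measure]
  filter_upwards [measure_eq_zero_iff_ae_notMem.mp hnull] with ω hω using not_lt.mp hω

end Law

lemma mul_rpow_neg_lt_mul_rpow_neg_iff {P Q η u v : ℝ} (hP : 0 < P) (hQ : 0 < Q) (hη : 0 < η)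
    (hu : 0 < u) (hv : 0 < v) :
    Q * v ^ (-η) < P * u ^ (-η) ↔ √((Q / P) ^ (2 / η)) * u < v := by
  have hQP : 0 < Q / P := div_pos hQ hP
  have hr : 0 < (Q / P) ^ η⁻¹ := rpow_pos_of_pos hQP _
  have hsqrt : √((Q / P) ^ (2 / η)) = (Q / P) ^ η⁻¹ := by
    rw [div_eq_mul_inv 2, mul_comm, rpow_mul hQP.le, rpow_two, sqrt_sq hr.le]
  have hpow : ((Q / P) ^ η⁻¹ * u) ^ η = Q / P * u ^ η := by
    rw [mul_rpow hr.le hu.le, ← rpow_mul hQP.le, inv_mul_cancel₀ hη.ne', rpow_one]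
  have hu' := rpow_pos_of_pos hu η
  have hv' := rpow_pos_of_pos hv η
  calc Q * v ^ (-η) < P * u ^ (-η) ↔ Q / P * u ^ η < v ^ η := by
        rw [rpow_neg hu.le, rpow_neg hv.le, ← div_eq_mul_inv, ← div_eq_mul_inv,
          div_lt_div_iff₀ hv' hu', div_mul_eq_mul_div, div_lt_iff₀ hP, mul_comm (v ^ η)]
    _ ↔ (Q / P) ^ η⁻¹ * u < v := by rw [← hpow, rpow_lt_rpow_iff (by positivity) hv.le hη]
    _ ↔ √((Q / P) ^ (2 / η)) * u < v := by rw [hsqrt]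

section Association

variable {Ω : Type*} [MeasurableSpace Ω] {μ : Measure Ω} {X Y W : Ω → ℝ}

lemma measure_mul_rpow_neg_gt_and_gt_eq {P Q R η : ℝ} (hP : 0 < P) (hQ : 0 < Q) (hR : 0 < R)
    (hη : 0 < η) (hX : ∀ᵐ ω ∂μ, 0 < X ω) (hY : ∀ᵐ ω ∂μ, 0 < Y ω) (hW : ∀ᵐ ω ∂μ, 0 < W ω) :
    μ {ω | P * X ω ^ (-η) > Q * Y ω ^ (-η) ∧ P * X ω ^ (-η) > R * W ω ^ (-η)} =
      μ {ω | √((Q / P) ^ (2 / η)) * X ω < Y ω ∧ √((R / P) ^ (2 / η)) * X ω < W ω} := by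
  refine measure_congr (eventuallyEq_set.mpr ?_)
  filter_upwards [hX, hY, hW] with ω hXω hYω hWω
  exact and_congr (mul_rpow_neg_lt_mul_rpow_neg_iff hP hQ hη hXω hYω)
    (mul_rpow_neg_lt_mul_rpow_neg_iff hP hR hη hXω hWω)

lemma measure_lt_and_lt_eq_lintegral [IsFiniteMeasure μ] (hX : Measurable X)
    (hY : Measurable Y) (hW : Measurable W) (hind : iIndepFun ![Y, X, W] μ) {f g : ℝ → ℝ}
    (hf : Measurable f) (hg : Measurable g) :
    μ {ω | f (X ω) < Y ω ∧ g (X ω) < W ω} =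
      ∫⁻ x, μ {ω | Y ω > f x} * μ {ω | W ω > g x} ∂μ.map X := by
  have hmeas : ∀ i, Measurable (![Y, X, W] i) := by
    intro i; fin_cases i <;> assumption
  have hX_YW : IndepFun X (fun ω => (Y ω, W ω)) μ := by
    simpa using (hind.indepFun_prodMk hmeas 0 2 1 (by decide) (by decide)).symm
  have hYW : IndepFun Y W μ := by simpa using hind.indepFun (show (0 : Fin 3) ≠ 2 by decide)
  have hS : MeasurableSet {p : ℝ × ℝ × ℝ | f p.1 < p.2.1 ∧ g p.1 < p.2.2} :=
    (measurableSet_lt (hf.comp measurable_fst) (measurable_fst.comp measurable_snd)).inter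
      (measurableSet_lt (hg.comp measurable_fst) (measurable_snd.comp measurable_snd))
  have hXYW : Measurable fun ω => (X ω, Y ω, W ω) := hX.prodMk (hY.prodMk hW)
  calc μ {ω | f (X ω) < Y ω ∧ g (X ω) < W ω}
      = μ.map (fun ω => (X ω, Y ω, W ω)) {p | f p.1 < p.2.1 ∧ g p.1 < p.2.2} :=
        (Measure.map_apply hXYW hS).symm
    _ = ∫⁻ x, (μ.map Y).prod (μ.map W) (Ioi (f x) ×ˢ Ioi (g x)) ∂μ.map X := by
        rw [(indepFun_iff_map_prod_eq_prod_map_map hX.aemeasurable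
            (hY.prodMk hW).aemeasurable).mp hX_YW, Measure.prod_apply hS,
          (indepFun_iff_map_prod_eq_prod_map_map hY.aemeasurable hW.aemeasurable).mp hYW]
        rfl
    _ = ∫⁻ x, μ {ω | Y ω > f x} * μ {ω | W ω > g x} ∂μ.map X := by
        simp_rw [Measure.prod_prod, Measure.map_apply hY measurableSet_Ioi,
          Measure.map_apply hW measurableSet_Ioi]
        rfl

lemma toReal_measure_mul_lt_and_mul_lt_eq_integral [IsProbabilityMeasure μ] (hX : Measurable X)
    (hY : Measurable Y) (hW : Measurable W) (hind : iIndepFun ![Y, X, W] μ)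
    {lX dX lY dY lW dW : ℝ} (hlX : 0 < lX) (hdX : 0 ≤ dX)
    (hX_surv : ∀ x, μ {ω | X ω > x} = ENNReal.ofReal (tierSurv lX dX x))
    (hY_surv : ∀ x, μ {ω | Y ω > x} = ENNReal.ofReal (tierSurv lY dY x))
    (hW_surv : ∀ x, μ {ω | W ω > x} = ENNReal.ofReal (tierSurv lW dW x)) (a b : ℝ) :
    (μ {ω | a * X ω < Y ω ∧ b * X ω < W ω}).toReal =
      ∫ x, tierPDF lX dX x * (tierSurv lY dY (a * x) * tierSurv lW dW (b * x)) := by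
  have hY_meas : Measurable fun x => tierSurv lY dY (a * x) :=
    measurable_tierSurv.comp (measurable_id.const_mul a)
  have hW_meas : Measurable fun x => tierSurv lW dW (b * x) :=
    measurable_tierSurv.comp (measurable_id.const_mul b)
  rw [measure_lt_and_lt_eq_lintegral (f := (a * ·)) (g := (b * ·)) hX hY hW hind
      (by fun_prop) (by fun_prop), map_eq_withDensity_tierPDF hX hlX hdX hX_surv,
    integral_eq_lintegral_of_nonneg_ae (ae_of_all _ fun x => mul_nonneg
      (tierPDF_nonneg hlX.le hdX) (mul_nonneg tierSurv_nonneg tierSurv_nonneg))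
      (measurable_tierPDF.mul (hY_meas.mul hW_meas)).aestronglyMeasurable,
    lintegral_withDensity_eq_lintegral_mul _ measurable_tierPDF.ennreal_ofReal
      (by simp_rw [hY_surv, hW_surv]; exact hY_meas.ennreal_ofReal.mul hW_meas.ennreal_ofReal)]
  congr 1
  refine lintegral_congr fun x => ?_
  simp only [Pi.mul_apply, hY_surv, hW_surv]
  rw [ENNReal.ofReal_mul (tierPDF_nonneg hlX.le hdX), ENNReal.ofReal_mul tierSurv_nonneg]

end Association

lemma integral_Ioi_eq_add_add {E : Type*} [NormedAddCommGroup E] [NormedSpace ℝ E] {f : ℝ → E}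
    {a b c : ℝ} (hab : a ≤ b) (hbc : b ≤ c) (hf : IntegrableOn f (Ioi a)) :
    ∫ x in Ioi a, f x = (∫ x in Ioc a b, f x) + (∫ x in Ioc b c, f x) + ∫ x in Ioi c, f x := by
  rw [← Ioc_union_Ioi_eq_Ioi hab, setIntegral_union (Ioc_disjoint_Ioi le_rfl) measurableSet_Ioi
      (hf.mono_set Ioc_subset_Ioi_self) (hf.mono_set (Ioi_subset_Ioi hab)),
    ← Ioc_union_Ioi_eq_Ioi hbc, setIntegral_union (Ioc_disjoint_Ioi le_rfl) measurableSet_Ioi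
      ((hf.mono_set (Ioi_subset_Ioi hab)).mono_set Ioc_subset_Ioi_self)
      (hf.mono_set (Ioi_subset_Ioi (hab.trans hbc))), add_assoc]

lemma integrable_tierPDF_mul_tierSurv_mul_tierSurv {ls hs lm hm lv hv : ℝ} (hls : 0 < ls)
    (hlm : 0 ≤ lm) (hlv : 0 ≤ lv) (hhm : 0 ≤ hm) (hhv : 0 ≤ hv) (a b : ℝ) :
    Integrable fun x => tierPDF ls hs x * (tierSurv lm hm (a * x) * tierSurv lv hv (b * x)) := by
  refine (integrable_tierPDF (h := hs) hls).mono (measurable_tierPDF.mul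
    ((measurable_tierSurv.comp (measurable_id.const_mul a)).mul
      (measurable_tierSurv.comp (measurable_id.const_mul b)))).aestronglyMeasurable
    (ae_of_all _ fun x => ?_)
  rw [norm_mul, norm_mul, norm_of_nonneg tierSurv_nonneg, norm_of_nonneg tierSurv_nonneg]
  exact mul_le_of_le_one_right (norm_nonneg _)
    (mul_le_one₀ (tierSurv_le_one hlm hhm) tierSurv_nonneg (tierSurv_le_one hlv hhv))

lemma integral_tierPDF_mul_tierSurv_mul_tierSurv {ls hs lm hm lv hv a b : ℝ}
    (hls : 0 < ls) (hlm : 0 < lm) (hlv : 0 < lv) (hhm : 0 ≤ hm) (hhv : 0 ≤ hv)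
    (ha : 0 < a) (hb : 0 < b) (hsm : hs ≤ hm / a) (hmv : hm / a ≤ hv / b) :
    ∫ x, tierPDF ls hs x * (tierSurv lm hm (a * x) * tierSurv lv hv (b * x)) =
      (1 - exp (-(π * ls * ((hm / a) ^ 2 - hs ^ 2)))) +
      ls / (ls + lm * a ^ 2) *
        (exp (-(π * (ls + lm * a ^ 2) * (hm / a) ^ 2) + π * (ls * hs ^ 2 + lm * hm ^ 2)) -
          exp (-(π * (ls + lm * a ^ 2) * (hv / b) ^ 2) + π * (ls * hs ^ 2 + lm * hm ^ 2))) +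
      ls / (ls + lm * a ^ 2 + lv * b ^ 2) *
        exp (-(π * (ls + lm * a ^ 2 + lv * b ^ 2) * (hv / b) ^ 2) +
          π * (ls * hs ^ 2 + lm * hm ^ 2 + lv * hv ^ 2)) := by
  set g : ℝ → ℝ := fun x => 2 * π * ls * x * exp (-(π * ls * x ^ 2) + π * ls * hs ^ 2) *
    (tierSurv lm hm (a * x) * tierSurv lv hv (b * x))
  have hg : (fun x => tierPDF ls hs x * (tierSurv lm hm (a * x) * tierSurv lv hv (b * x))) =
      (Ici hs).indicator g := by
    funext x
    rcases lt_or_ge x hs with hx | hx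
    · rw [tierPDF_of_lt hx, zero_mul, indicator_of_notMem (notMem_Ici.mpr hx)]
    · rw [tierPDF_of_ge hx, indicator_of_mem (mem_Ici.mpr hx)]
  have hint : IntegrableOn g (Ioi hs) := by
    refine IntegrableOn.mono_set ?_ Ioi_subset_Ici_self
    rw [← integrable_indicator_iff measurableSet_Ici, ← hg]
    exact integrable_tierPDF_mul_tierSurv_mul_tierSurv hls hlm.le hlv.le hhm hhv a b
  rw [hg, integral_indicator measurableSet_Ici, integral_Ici_eq_integral_Ioi,
    integral_Ioi_eq_add_add hsm hmv hint]
  have near : ∫ x in Ioc hs (hm / a), g x =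
      ∫ x in Ioc hs (hm / a), 2 * π * ls * x * exp (-(π * ls * x ^ 2) + π * ls * hs ^ 2) := by
    refine setIntegral_congr_fun measurableSet_Ioc fun x hx => ?_
    have hax : a * x ≤ hm := (le_div_iff₀' ha).mp hx.2
    have hbx : b * x ≤ hv := (le_div_iff₀' hb).mp (hx.2.trans hmv)
    simp only [g, tierSurv_of_le hax, tierSurv_of_le hbx, mul_one]
  have middle : ∫ x in Ioc (hm / a) (hv / b), g x = ∫ x in Ioc (hm / a) (hv / b), 2 * π * ls * x *
      exp (-(π * (ls + lm * a ^ 2) * x ^ 2) + π * (ls * hs ^ 2 + lm * hm ^ 2)) := by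
    refine setIntegral_congr_fun measurableSet_Ioc fun x hx => ?_
    have hax : hm ≤ a * x := ((div_lt_iff₀' ha).mp hx.1).le
    have hbx : b * x ≤ hv := (le_div_iff₀' hb).mp hx.2
    simp only [g, tierSurv_of_ge hax, tierSurv_of_le hbx, mul_one, mul_assoc, ← exp_add]
    ring_nf
  have far : ∫ x in Ioi (hv / b), g x = ∫ x in Ioi (hv / b), 2 * π * ls * x *
      exp (-(π * (ls + lm * a ^ 2 + lv * b ^ 2) * x ^ 2) +
        π * (ls * hs ^ 2 + lm * hm ^ 2 + lv * hv ^ 2)) := by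
    refine setIntegral_congr_fun measurableSet_Ioi fun x hx => ?_
    have hax : hm ≤ a * x := ((div_lt_iff₀' ha).mp (hmv.trans_lt hx)).le
    have hbx : hv ≤ b * x := ((div_lt_iff₀' hb).mp hx).le
    simp only [g, tierSurv_of_ge hax, tierSurv_of_ge hbx, mul_assoc, ← exp_add]
    ring_nf
  rw [near, middle, far, integral_Ioc_two_pi_mul_exp hls.ne' _ _ hsm,
    integral_Ioc_two_pi_mul_exp (by positivity) _ _ hmv,
    integral_Ioi_two_pi_mul_exp (by positivity),
    div_self hls.ne', one_mul, neg_add_cancel, exp_zero]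
  ring_nf

lemma div_rpow_mul_div_rpow {x y z : ℝ} (hx : 0 < x) (hy : 0 < y) (hz : 0 < z) (p : ℝ) :
    (x / y) ^ p * (y / z) ^ p = (x / z) ^ p := by
  rw [← mul_rpow (by positivity) (by positivity), div_mul_div_cancel₀ hy.ne']

lemma div_rpow_mul_div_rpow_self {x y : ℝ} (hx : 0 < x) (hy : 0 < y) (p : ℝ) :
    (x / y) ^ p * (y / x) ^ p = 1 := by
  rw [div_rpow_mul_div_rpow hx hy hx, div_self hx.ne', one_rpow]

lemma integral_tierPDF_mul_tierSurv_sqrt_mul_tierSurv_sqrt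
    {ls hs lm hm lv hv Psm Pms Pmv Pvm Psv Pvs : ℝ} (hls : 0 < ls) (hlm : 0 < lm) (hlv : 0 < lv)
    (hhm : 0 ≤ hm) (hhv : 0 ≤ hv) (hPms : 0 < Pms) (hPvs : 0 < Pvs)
    (hsm_ms : Psm * Pms = 1) (hsv_vs : Psv * Pvs = 1) (hsm_mv : Psm * Pmv = Psv)
    (hvm_mv : Pvm * Pmv = 1) (hsm2 : hs ^ 2 ≤ Psm * hm ^ 2) (hmv2 : hm ^ 2 ≤ Pmv * hv ^ 2) :
    ∫ x, tierPDF ls hs x * (tierSurv lm hm (√Pms * x) * tierSurv lv hv (√Pvs * x)) =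
      (1 - exp (-(π * ls * (hm ^ 2 * Psm - hs ^ 2)))) +
      ls / (ls + lm * Pms) *
        (exp (-(π * Psm * hm ^ 2 * (ls + lm * Pms)) + π * (ls * hs ^ 2 + lm * hm ^ 2)) -
          exp (-(π * hv ^ 2 * Psv * (ls + lm * Pms)) + π * (ls * hs ^ 2 + lm * hm ^ 2))) +
      ls / (ls + lm * Pms + lv * Pvs) *
        exp (-(π * Pmv * hv ^ 2 * (lm + ls * Psm + lv * Pvm)) +
          π * (lm * hm ^ 2 + ls * hs ^ 2 + lv * hv ^ 2)) := by
  have hPsm : 0 < Psm := (mul_pos_iff_of_pos_right hPms).mp (hsm_ms ▸ one_pos)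
  have hm_bp : (hm / √Pms) ^ 2 = Psm * hm ^ 2 := by
    rw [div_pow, sq_sqrt hPms.le, div_eq_iff hPms.ne']
    linear_combination (-hm ^ 2) * hsm_ms
  have hv_bp : (hv / √Pvs) ^ 2 = Psv * hv ^ 2 := by
    rw [div_pow, sq_sqrt hPvs.le, div_eq_iff hPvs.ne']
    linear_combination (-hv ^ 2) * hsv_vs
  have hsm_bp : hs ≤ hm / √Pms :=
    le_of_pow_le_pow_left₀ two_ne_zero (by positivity) (hm_bp ▸ hsm2)
  have hmv_bp : hm / √Pms ≤ hv / √Pvs := by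
    refine le_of_pow_le_pow_left₀ two_ne_zero (by positivity) ?_
    rw [hm_bp, hv_bp, ← hsm_mv, mul_assoc]
    exact mul_le_mul_of_nonneg_left hmv2 hPsm.le
  rw [integral_tierPDF_mul_tierSurv_mul_tierSurv hls hlm hlv hhm hhv (by positivity)
      (by positivity) hsm_bp hmv_bp, hm_bp, hv_bp, sq_sqrt hPms.le, sq_sqrt hPvs.le,
    show π * (ls + lm * Pms + lv * Pvs) * (Psv * hv ^ 2) =
      π * Pmv * hv ^ 2 * (lm + ls * Psm + lv * Pvm) by
        linear_combination π * hv ^ 2 * (lm * Pmv * hsm_ms - lm * Pms * hsm_mv + lv * hsv_vs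
          - ls * hsm_mv - lv * hvm_mv)]
  ring_nf

theorem stmt1_general
    {Ω : Type*} [MeasureSpace Ω] [IsProbabilityMeasure (ℙ : Measure Ω)]
    (Zm Zs Zv : Ω → ℝ)
    (hZmMeas : Measurable Zm) (hZsMeas : Measurable Zs) (hZvMeas : Measurable Zv)
    (hIndep : iIndepFun ![Zm, Zs, Zv] ℙ)
    (lm ls lv hm hs hv Pm Ps Pv eta : ℝ)
    (hlm : 0 < lm) (hls : 0 < ls) (hlv : 0 < lv)
    (hhm : 0 < hm) (hhs : 0 < hs) (hhv : 0 < hv)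
    (hPm : 0 < Pm) (hPs : 0 < Ps) (hPv : 0 < Pv)
    (heta : 2 < eta)
    (Psm Pms Pmv Pvm Psv Pvs : ℝ)
    (hPsm : Psm = (Ps / Pm) ^ (2 / eta)) (hPms : Pms = (Pm / Ps) ^ (2 / eta))
    (hPmv : Pmv = (Pm / Pv) ^ (2 / eta)) (hPvm : Pvm = (Pv / Pm) ^ (2 / eta))
    (hPsv : Psv = (Ps / Pv) ^ (2 / eta)) (hPvs : Pvs = (Pv / Ps) ^ (2 / eta))
    (hZmCCDF : ∀ x : ℝ, ℙ {ω | Zm ω > x} =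
      if x < hm then 1 else ENNReal.ofReal (Real.exp (-(π * lm * (x ^ 2 - hm ^ 2)))))
    (hZsCCDF : ∀ x : ℝ, ℙ {ω | Zs ω > x} =
      if x < hs then 1 else ENNReal.ofReal (Real.exp (-(π * ls * (x ^ 2 - hs ^ 2)))))
    (hZvCCDF : ∀ x : ℝ, ℙ {ω | Zv ω > x} =
      if x < hv then 1 else ENNReal.ofReal (Real.exp (-(π * lv * (x ^ 2 - hv ^ 2)))))
    (hsm2 : hs ^ 2 ≤ Psm * hm ^ 2) (hmv2 : hm ^ 2 ≤ Pmv * hv ^ 2) :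
    (ℙ {ω | Ps * Zs ω ^ (-eta) > Pm * Zm ω ^ (-eta) ∧ Ps * Zs ω ^ (-eta) > Pv * Zv ω ^ (-eta)}).toReal =
      (1 - Real.exp (-(π * ls * (hm ^ 2 * Psm - hs ^ 2)))) +
      ls / (ls + lm * Pms) *
        (Real.exp (-(π * Psm * hm ^ 2 * (ls + lm * Pms)) + π * (ls * hs ^ 2 + lm * hm ^ 2)) -
          Real.exp (-(π * hv ^ 2 * Psv * (ls + lm * Pms)) + π * (ls * hs ^ 2 + lm * hm ^ 2))) +
      ls / (ls + lm * Pms + lv * Pvs) *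
        Real.exp (-(π * Pmv * hv ^ 2 * (lm + ls * Psm + lv * Pvm)) +
          π * (lm * hm ^ 2 + ls * hs ^ 2 + lv * hv ^ 2)) := by
  have hm_surv x : ℙ {ω | Zm ω > x} = .ofReal (tierSurv lm hm x) :=
    (hZmCCDF x).trans ofReal_tierSurv.symm
  have hs_surv x : ℙ {ω | Zs ω > x} = .ofReal (tierSurv ls hs x) :=
    (hZsCCDF x).trans ofReal_tierSurv.symm
  have hv_surv x : ℙ {ω | Zv ω > x} = .ofReal (tierSurv lv hv x) :=
    (hZvCCDF x).trans ofReal_tierSurv.symm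
  have ae_pos {Z : Ω → ℝ} {l h : ℝ} (hZ : Measurable Z) (hl : 0 < l) (hh : 0 < h)
      (hZ_surv : ∀ x, ℙ {ω | Z ω > x} = .ofReal (tierSurv l h x)) : ∀ᵐ ω ∂ℙ, 0 < Z ω :=
    (ae_le_of_tierSurv hZ hl hh.le hZ_surv).mono fun _ hω => hh.trans_le hω
  rw [measure_mul_rpow_neg_gt_and_gt_eq hPs hPm hPv (by linarith) (ae_pos hZsMeas hls hhs hs_surv)
      (ae_pos hZmMeas hlm hhm hm_surv) (ae_pos hZvMeas hlv hhv hv_surv), ← hPms, ← hPvs,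
    toReal_measure_mul_lt_and_mul_lt_eq_integral hZsMeas hZmMeas hZvMeas hIndep hls hhs.le
      hs_surv hm_surv hv_surv]
  exact integral_tierPDF_mul_tierSurv_sqrt_mul_tierSurv_sqrt hls hlm hlv hhm.le hhv.le
    (hPms ▸ by positivity) (hPvs ▸ by positivity)
    (by rw [hPsm, hPms, div_rpow_mul_div_rpow_self hPs hPm])
    (by rw [hPsv, hPvs, div_rpow_mul_div_rpow_self hPs hPv])
    (by rw [hPsm, hPmv, hPsv, div_rpow_mul_div_rpow hPs hPm hPv])
    (by rw [hPvm, hPmv, div_rpow_mul_div_rpow_self hPv hPm]) hsm2 hmv2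

theorem stmt1
    {Ω : Type*} [MeasureSpace Ω] [IsProbabilityMeasure (ℙ : Measure Ω)]
    (Zm Zs Zv : Ω → ℝ)
    (hZmMeas : Measurable Zm) (hZsMeas : Measurable Zs) (hZvMeas : Measurable Zv)
    (hIndep : iIndepFun ![Zm, Zs, Zv] ℙ)
    (lm ls lv hm hs hv Pm Ps Pv eta : ℝ)
    (hlm : 0 < lm) (hls : 0 < ls) (hlv : 0 < lv)
    (hhm : 0 < hm) (hhs : 0 < hs) (hhv : 0 < hv)
    (hPm : 0 < Pm) (hPs : 0 < Ps) (hPv : 0 < Pv)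
    (heta : 2 < eta)
    (Psm Pms Pmv Pvm Psv Pvs : ℝ)
    (hPsm : Psm = (Ps / Pm) ^ (2 / eta)) (hPms : Pms = (Pm / Ps) ^ (2 / eta))
    (hPmv : Pmv = (Pm / Pv) ^ (2 / eta)) (hPvm : Pvm = (Pv / Pm) ^ (2 / eta))
    (hPsv : Psv = (Ps / Pv) ^ (2 / eta)) (hPvs : Pvs = (Pv / Ps) ^ (2 / eta))
    (hZmCCDF : ∀ x : ℝ, ℙ {ω | Zm ω > x} =
      if x < hm then 1 else ENNReal.ofReal (Real.exp (-(π * lm * (x ^ 2 - hm ^ 2)))))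
    (hZsCCDF : ∀ x : ℝ, ℙ {ω | Zs ω > x} =
      if x < hs then 1 else ENNReal.ofReal (Real.exp (-(π * ls * (x ^ 2 - hs ^ 2)))))
    (hZvCCDF : ∀ x : ℝ, ℙ {ω | Zv ω > x} =
      if x < hv then 1 else ENNReal.ofReal (Real.exp (-(π * lv * (x ^ 2 - hv ^ 2)))))
    (hsm : hs < hm) (hmv : hm < hv)
    (hsm2 : hs ^ 2 ≤ Psm * hm ^ 2) (hmv2 : hm ^ 2 ≤ Pmv * hv ^ 2) :
    (ℙ {ω | Ps * Zs ω ^ (-eta) > Pm * Zm ω ^ (-eta) ∧ Ps * Zs ω ^ (-eta) > Pv * Zv ω ^ (-eta)}).toReal =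
      (1 - Real.exp (-(π * ls * (hm ^ 2 * Psm - hs ^ 2)))) +
      ls / (ls + lm * Pms) *
        (Real.exp (-(π * Psm * hm ^ 2 * (ls + lm * Pms)) + π * (ls * hs ^ 2 + lm * hm ^ 2)) -
          Real.exp (-(π * hv ^ 2 * Psv * (ls + lm * Pms)) + π * (ls * hs ^ 2 + lm * hm ^ 2))) +
      ls / (ls + lm * Pms + lv * Pvs) *
        Real.exp (-(π * Pmv * hv ^ 2 * (lm + ls * Psm + lv * Pvm)) +
          π * (lm * hm ^ 2 + ls * hs ^ 2 + lv * hv ^ 2)) :=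
  stmt1_general Zm Zs Zv hZmMeas hZsMeas hZvMeas hIndep lm ls lv hm hs hv Pm Ps Pv eta hlm hls hlv
    hhm hhs hhv hPm hPs hPv heta Psm Pms Pmv Pvm Psv Pvs hPsm hPms hPmv hPvm hPsv hPvs hZmCCDF
    hZsCCDF hZvCCDF hsm2 hmv2
end

section
/- Under the three-tier association model, the probability that the user associates with the UAV tier equals A_v = λ_v/(λ_v + λ_m·P_mv + λ_s·P_sv) · exp(−π·h_v²·(λ_v + λ_m·P_mv + λ_s·P_sv) + π·(λ_m·h_m² + λ_s·h_s² + λ_v·h_v²)). -/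
/-!
With `a = (P_m/P_v)^(1/η)` and `b = (P_s/P_v)^(1/η)` (so `a² = P_mv`, `b² = P_sv`), the user
associates with the UAV tier iff `a·Z_v < Z_m` and `b·Z_v < Z_s`. By independence this has
probability `∫ P[Z_m > a z]·P[Z_s > b z] dP_{Z_v}(z)`. The height conditions give `a·h_v ≥ h_m` and
`b·h_v ≥ h_s`, so on the support `z > h_v` of `Z_v` both tails are Gaussian in `z`; against the
density `2πλ_v z·exp(-πλ_v(z² - h_v²))` of `Z_v` the integrand is again a constant multiple of such
a density, whose tail integral is explicit.
-/

open MeasureTheory ProbabilityTheory Real Filter Set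
open scoped ENNReal Topology

lemma rpow_one_div_sq {x : ℝ} (hx : 0 ≤ x) (e : ℝ) : (x ^ (1 / e)) ^ 2 = x ^ (2 / e) := by
  rw [← rpow_natCast, ← rpow_mul hx]
  ring_nf

lemma mul_rpow_neg_lt_mul_rpow_neg_iff_s2 {P Q e x y : ℝ} (hP : 0 < P) (hQ : 0 < Q) (he : 0 < e)
    (hx : 0 < x) (hy : 0 < y) :
    P * y ^ (-e) < Q * x ^ (-e) ↔ (P / Q) ^ (1 / e) * x < y := by
  rw [rpow_neg hx.le, rpow_neg hy.le, ← div_eq_mul_inv, ← div_eq_mul_inv,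
    div_lt_div_iff₀ (rpow_pos_of_pos hy e) (rpow_pos_of_pos hx e),
    ← rpow_lt_rpow_iff (by positivity) hy.le he, mul_rpow (by positivity) hx.le,
    ← rpow_mul (div_pos hP hQ).le, one_div_mul_cancel he.ne', rpow_one, div_mul_eq_mul_div,
    div_lt_iff₀ hQ, mul_comm (y ^ e) Q]

lemma hasDerivAt_exp_neg_mul_sq_sub (C s t : ℝ) :
    HasDerivAt (fun z => exp (-(C * (z ^ 2 - s)))) (-(2 * C * t * exp (-(C * (t ^ 2 - s))))) t := by
  convert (((hasDerivAt_pow 2 t).sub_const s).const_mul (-C)).exp using 1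
  · simp only [neg_mul]
  · simp only [neg_mul, Nat.cast_ofNat]
    ring

lemma tendsto_exp_neg_mul_sq_sub_atTop {C : ℝ} (hC : 0 < C) (s : ℝ) :
    Tendsto (fun z => exp (-(C * (z ^ 2 - s)))) atTop (𝓝 0) :=
  tendsto_exp_atBot.comp <| tendsto_neg_atTop_atBot.comp <| Tendsto.const_mul_atTop hC <|
    tendsto_atTop_add_const_right _ (-s) (tendsto_pow_atTop two_ne_zero)

lemma lintegral_Ioi_ofReal_mul_exp_neg_mul_sq_sub {C a : ℝ} (hC : 0 < C) (ha : 0 ≤ a) (s : ℝ) :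
    ∫⁻ z in Ioi a, ENNReal.ofReal (2 * C * z * exp (-(C * (z ^ 2 - s)))) =
      ENNReal.ofReal (exp (-(C * (a ^ 2 - s)))) := by
  have hderiv : ∀ t ∈ Ici a, HasDerivAt (fun z => -exp (-(C * (z ^ 2 - s))))
      (2 * C * t * exp (-(C * (t ^ 2 - s)))) t :=
    fun t _ => (hasDerivAt_exp_neg_mul_sq_sub C s t).neg.congr_deriv (neg_neg _)
  have hnonneg : ∀ t ∈ Ioi a, 0 ≤ 2 * C * t * exp (-(C * (t ^ 2 - s))) := fun t ht => by
    have : 0 ≤ t := ha.trans (le_of_lt ht)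
    positivity
  have hlim : Tendsto (fun z => -exp (-(C * (z ^ 2 - s)))) atTop (𝓝 0) := by
    simpa using (tendsto_exp_neg_mul_sq_sub_atTop hC s).neg
  rw [← ofReal_integral_eq_lintegral_ofReal (integrableOn_Ioi_deriv_of_nonneg' hderiv hnonneg hlim)
      ((ae_restrict_iff' measurableSet_Ioi).2 (ae_of_all _ hnonneg)),
    integral_Ioi_of_hasDerivAt_of_nonneg' hderiv hnonneg hlim, zero_sub, neg_neg]

noncomputable def nearestBSTail (lam h x : ℝ) : ℝ≥0∞ :=
  if x < h then 1 else ENNReal.ofReal (exp (-(π * lam * (x ^ 2 - h ^ 2))))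

noncomputable def nearestBSDensity (lam h : ℝ) : ℝ → ℝ≥0∞ :=
  (Ioi h).indicator fun t => ENNReal.ofReal (2 * (π * lam) * t * exp (-(π * lam * (t ^ 2 - h ^ 2))))

noncomputable def nearestBSLaw (lam h : ℝ) : Measure ℝ :=
  volume.withDensity (nearestBSDensity lam h)

lemma nearestBSTail_of_le {lam h x : ℝ} (hx : h ≤ x) :
    nearestBSTail lam h x = ENNReal.ofReal (exp (-(π * lam * (x ^ 2 - h ^ 2)))) :=
  if_neg hx.not_gt

lemma measurable_nearestBSDensity (lam h : ℝ) : Measurable (nearestBSDensity lam h) :=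
  (ENNReal.measurable_ofReal.comp (by fun_prop)).indicator measurableSet_Ioi

lemma nearestBSLaw_Ioi {lam h : ℝ} (hlam : 0 < lam) (hh : 0 ≤ h) (x : ℝ) :
    nearestBSLaw lam h (Ioi x) = nearestBSTail lam h x := by
  rw [nearestBSLaw, withDensity_apply _ measurableSet_Ioi, nearestBSDensity,
    setLIntegral_indicator measurableSet_Ioi, Ioi_inter_Ioi,
    lintegral_Ioi_ofReal_mul_exp_neg_mul_sq_sub (by positivity) (hh.trans le_sup_left),
    nearestBSTail]
  split_ifs with hx
  · rw [sup_of_le_left hx.le, sub_self, mul_zero, neg_zero, exp_zero, ENNReal.ofReal_one]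
  · rw [sup_of_le_right (not_lt.1 hx)]

lemma isProbabilityMeasure_nearestBSLaw {lam h : ℝ} (hlam : 0 < lam) (hh : 0 ≤ h) :
    IsProbabilityMeasure (nearestBSLaw lam h) := by
  constructor
  rw [nearestBSLaw, withDensity_apply _ MeasurableSet.univ, Measure.restrict_univ,
    nearestBSDensity, lintegral_indicator measurableSet_Ioi,
    lintegral_Ioi_ofReal_mul_exp_neg_mul_sq_sub (by positivity) hh, sub_self, mul_zero, neg_zero,
    exp_zero, ENNReal.ofReal_one]

lemma lintegral_nearestBSLaw_of_eq_exp {lam h k d : ℝ} (hlam : 0 < lam) (hh : 0 ≤ h) (hk : 0 ≤ k)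
    {G : ℝ → ℝ≥0∞} (hG : ∀ z, h < z → G z = ENNReal.ofReal (exp (-(k * z ^ 2 - d)))) :
    ∫⁻ z, G z ∂nearestBSLaw lam h =
      ENNReal.ofReal (π * lam / (π * lam + k) * exp (-(k * h ^ 2 - d))) := by
  set C := π * lam + k
  have hC : 0 < C := by positivity
  have hpt : ∀ z ∈ Ioi h,
      ENNReal.ofReal (2 * (π * lam) * z * exp (-(π * lam * (z ^ 2 - h ^ 2)))) * G z =
        ENNReal.ofReal (π * lam / C * exp (-(k * h ^ 2 - d))) *
          ENNReal.ofReal (2 * C * z * exp (-(C * (z ^ 2 - h ^ 2)))) := by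
    intro z hz
    have hz0 : 0 ≤ z := hh.trans (le_of_lt hz)
    rw [hG z hz, ← ENNReal.ofReal_mul (by positivity), ← ENNReal.ofReal_mul (by positivity)]
    congr 1
    calc 2 * (π * lam) * z * exp (-(π * lam * (z ^ 2 - h ^ 2))) * exp (-(k * z ^ 2 - d))
        = 2 * (π * lam) * z * (exp (-(k * h ^ 2 - d)) * exp (-(C * (z ^ 2 - h ^ 2)))) := by
          rw [mul_assoc, ← exp_add, ← exp_add]
          congr 2
          ring
      _ = _ := by
          field_simp
  rw [nearestBSLaw, lintegral_withDensity_eq_lintegral_mul_non_measurable _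
      (measurable_nearestBSDensity lam h) (ae_of_all _ fun z => ?_)]
  · simp only [Pi.mul_apply, nearestBSDensity, ← indicator_mul_left]
    rw [lintegral_indicator measurableSet_Ioi, setLIntegral_congr_fun measurableSet_Ioi hpt,
      lintegral_const_mul' _ _ ENNReal.ofReal_ne_top,
      lintegral_Ioi_ofReal_mul_exp_neg_mul_sq_sub hC hh, sub_self, mul_zero, neg_zero, exp_zero,
      ENNReal.ofReal_one, mul_one]
  · unfold nearestBSDensity
    by_cases hz : z ∈ Ioi h <;> simp [hz]

section

variable {Ω : Type*} [MeasurableSpace Ω] {μ : Measure Ω} [IsProbabilityMeasure μ]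

lemma ae_pos_of_tail_eq_nearestBSTail {X : Ω → ℝ} (hX : Measurable X) {lam h : ℝ} (hh : 0 < h)
    (htail : ∀ x, μ {ω | x < X ω} = nearestBSTail lam h x) :
    ∀ᵐ ω ∂μ, 0 < X ω :=
  (ae_iff_measure_eq (measurableSet_lt measurable_const hX).nullMeasurableSet).2 <| by
    rw [htail, nearestBSTail, if_pos hh, measure_univ]

lemma map_eq_nearestBSLaw {X : Ω → ℝ} (hX : Measurable X) {lam h : ℝ} (hlam : 0 < lam) (hh : 0 ≤ h)
    (htail : ∀ x, μ {ω | x < X ω} = nearestBSTail lam h x) :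
    μ.map X = nearestBSLaw lam h := by
  have := isProbabilityMeasure_nearestBSLaw hlam hh
  have := Measure.isProbabilityMeasure_map (μ := μ) hX.aemeasurable
  refine Measure.ext_of_Iic _ _ fun x => ?_
  rw [← compl_Ioi, prob_compl_eq_one_sub measurableSet_Ioi, prob_compl_eq_one_sub measurableSet_Ioi,
    nearestBSLaw_Ioi hlam hh, Measure.map_apply hX measurableSet_Ioi, ← htail]
  rfl

lemma measure_lt_and_lt_eq_lintegral_map {Y W X : Ω → ℝ} (hY : Measurable Y) (hW : Measurable W)
    (hX : Measurable X) (hind : iIndepFun ![Y, W, X] μ) {u v : ℝ → ℝ} (hu : Measurable u)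
    (hv : Measurable v) :
    μ {ω | u (X ω) < Y ω ∧ v (X ω) < W ω} =
      ∫⁻ z, μ {ω | u z < Y ω} * μ {ω | v z < W ω} ∂μ.map X := by
  have hmeas : ∀ i, Measurable (![Y, W, X] i) := fun i => by fin_cases i <;> assumption
  have hX_YW : IndepFun X (fun ω => (Y ω, W ω)) μ := by
    simpa using (hind.indepFun_prodMk hmeas 0 1 2 (by decide) (by decide)).symm
  have hY_W : IndepFun Y W μ := by simpa using hind.indepFun (show (0 : Fin 3) ≠ 1 by decide)
  let U : Set (ℝ × ℝ × ℝ) := {p | u p.1 < p.2.1 ∧ v p.1 < p.2.2}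
  have hU : MeasurableSet U :=
    (measurableSet_lt (hu.comp measurable_fst) (measurable_fst.comp measurable_snd)).inter
      (measurableSet_lt (hv.comp measurable_fst) (measurable_snd.comp measurable_snd))
  calc μ {ω | u (X ω) < Y ω ∧ v (X ω) < W ω} = μ.map (fun ω => (X ω, Y ω, W ω)) U :=
        (Measure.map_apply (hX.prodMk (hY.prodMk hW)) hU).symm
    _ = ((μ.map X).prod ((μ.map Y).prod (μ.map W))) U := by
        rw [(indepFun_iff_map_prod_eq_prod_map_map hX.aemeasurable
            (hY.prodMk hW).aemeasurable).1 hX_YW,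
          (indepFun_iff_map_prod_eq_prod_map_map hY.aemeasurable hW.aemeasurable).1 hY_W]
    _ = _ := by
        rw [Measure.prod_apply hU]
        refine lintegral_congr fun z => ?_
        rw [show Prod.mk z ⁻¹' U = Ioi (u z) ×ˢ Ioi (v z) from rfl, Measure.prod_prod,
          Measure.map_apply hY measurableSet_Ioi, Measure.map_apply hW measurableSet_Ioi]
        rfl

theorem measure_mul_lt_and_mul_lt_of_nearestBSTail {Y W X : Ω → ℝ} (hY : Measurable Y)
    (hW : Measurable W) (hX : Measurable X) (hind : iIndepFun ![Y, W, X] μ)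
    {l₁ l₂ l₀ h₁ h₂ h₀ a b : ℝ} (hl₁ : 0 ≤ l₁) (hl₂ : 0 ≤ l₂) (hl₀ : 0 < l₀) (hh₀ : 0 ≤ h₀)
    (ha : 0 ≤ a) (hb : 0 ≤ b) (hah : h₁ ≤ a * h₀) (hbh : h₂ ≤ b * h₀)
    (hY_tail : ∀ x, μ {ω | x < Y ω} = nearestBSTail l₁ h₁ x)
    (hW_tail : ∀ x, μ {ω | x < W ω} = nearestBSTail l₂ h₂ x)
    (hX_tail : ∀ x, μ {ω | x < X ω} = nearestBSTail l₀ h₀ x) :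
    μ {ω | a * X ω < Y ω ∧ b * X ω < W ω} =
      ENNReal.ofReal (l₀ / (l₀ + l₁ * a ^ 2 + l₂ * b ^ 2) *
        exp (-(π * ((l₁ * a ^ 2 + l₂ * b ^ 2) * h₀ ^ 2 - l₁ * h₁ ^ 2 - l₂ * h₂ ^ 2)))) := by
  have hG : ∀ z, h₀ < z → μ {ω | a * z < Y ω} * μ {ω | b * z < W ω} =
      ENNReal.ofReal (exp (-(π * (l₁ * a ^ 2 + l₂ * b ^ 2) * z ^ 2 -
        π * (l₁ * h₁ ^ 2 + l₂ * h₂ ^ 2)))) := by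
    intro z hz
    rw [hY_tail, hW_tail, nearestBSTail_of_le (hah.trans (by gcongr)),
      nearestBSTail_of_le (hbh.trans (by gcongr)), ← ENNReal.ofReal_mul (exp_nonneg _),
      ← exp_add]
    congr 2
    ring
  rw [measure_lt_and_lt_eq_lintegral_map hY hW hX hind (measurable_const_mul a)
      (measurable_const_mul b), map_eq_nearestBSLaw hX hl₀ hh₀ hX_tail,
    lintegral_nearestBSLaw_of_eq_exp hl₀ hh₀ (by positivity) hG, ← mul_add,
    mul_div_mul_left _ _ pi_ne_zero, ← add_assoc]
  congr 3
  ring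

end

theorem stmt2_general
    {Ω : Type*} [MeasureSpace Ω] [IsProbabilityMeasure (ℙ : Measure Ω)]
    (Zm Zs Zv : Ω → ℝ)
    (hZmMeas : Measurable Zm) (hZsMeas : Measurable Zs) (hZvMeas : Measurable Zv)
    (hIndep : iIndepFun ![Zm, Zs, Zv] ℙ)
    (lm ls lv hm hs hv Pm Ps Pv eta : ℝ)
    (hlm : 0 < lm) (hls : 0 < ls) (hlv : 0 < lv)
    (hhm : 0 < hm) (hhs : 0 < hs) (hhv : 0 < hv)
    (hPm : 0 < Pm) (hPs : 0 < Ps) (hPv : 0 < Pv)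
    (heta : 2 < eta)
    (Psm Pmv Psv : ℝ)
    (hPsm : Psm = (Ps / Pm) ^ (2 / eta))
    (hPmv : Pmv = (Pm / Pv) ^ (2 / eta))
    (hPsv : Psv = (Ps / Pv) ^ (2 / eta))
    (hZmCCDF : ∀ x : ℝ, ℙ {ω | Zm ω > x} =
      if x < hm then 1 else ENNReal.ofReal (Real.exp (-(π * lm * (x ^ 2 - hm ^ 2)))))
    (hZsCCDF : ∀ x : ℝ, ℙ {ω | Zs ω > x} =
      if x < hs then 1 else ENNReal.ofReal (Real.exp (-(π * ls * (x ^ 2 - hs ^ 2)))))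
    (hZvCCDF : ∀ x : ℝ, ℙ {ω | Zv ω > x} =
      if x < hv then 1 else ENNReal.ofReal (Real.exp (-(π * lv * (x ^ 2 - hv ^ 2)))))
    (hsm2 : hs ^ 2 ≤ Psm * hm ^ 2) (hmv2 : hm ^ 2 ≤ Pmv * hv ^ 2) :
    (ℙ {ω | Pv * Zv ω ^ (-eta) > Pm * Zm ω ^ (-eta) ∧ Pv * Zv ω ^ (-eta) > Ps * Zs ω ^ (-eta)}).toReal =
      lv / (lv + lm * Pmv + ls * Psv) *
      Real.exp (-(π * hv ^ 2 * (lv + lm * Pmv + ls * Psv)) +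
        π * (lm * hm ^ 2 + ls * hs ^ 2 + lv * hv ^ 2)) := by
  have he : 0 < eta := by linarith
  set a := (Pm / Pv) ^ (1 / eta)
  set b := (Ps / Pv) ^ (1 / eta)
  have ha2 : a ^ 2 = Pmv := by rw [hPmv, rpow_one_div_sq (by positivity)]
  have hb2 : b ^ 2 = Psv := by rw [hPsv, rpow_one_div_sq (by positivity)]
  have hPsv_eq : Psv = Psm * Pmv := by
    rw [hPsv, hPsm, hPmv, ← mul_rpow (by positivity) (by positivity), div_mul_div_cancel₀ hPm.ne']
  have hahv : hm ≤ a * hv :=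
    (abs_le_of_sq_le_sq' (by rwa [mul_pow, ha2]) (by positivity)).2
  have hbhv : hs ≤ b * hv := by
    refine (abs_le_of_sq_le_sq' ?_ (by positivity)).2
    rw [mul_pow, hb2, hPsv_eq, mul_assoc]
    exact hsm2.trans (mul_le_mul_of_nonneg_left hmv2 (hPsm ▸ by positivity))
  have hevent : {ω | Pv * Zv ω ^ (-eta) > Pm * Zm ω ^ (-eta) ∧ Pv * Zv ω ^ (-eta) > Ps * Zs ω ^ (-eta)}
      =ᵐ[ℙ] {ω | a * Zv ω < Zm ω ∧ b * Zv ω < Zs ω} := by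
    rw [Filter.eventuallyEq_set]
    filter_upwards [ae_pos_of_tail_eq_nearestBSTail hZmMeas hhm hZmCCDF,
      ae_pos_of_tail_eq_nearestBSTail hZsMeas hhs hZsCCDF,
      ae_pos_of_tail_eq_nearestBSTail hZvMeas hhv hZvCCDF] with ω hZm hZs hZv
    exact and_congr (mul_rpow_neg_lt_mul_rpow_neg_iff_s2 hPm hPv he hZv hZm)
      (mul_rpow_neg_lt_mul_rpow_neg_iff_s2 hPs hPv he hZv hZs)
  rw [measure_congr hevent, measure_mul_lt_and_mul_lt_of_nearestBSTail hZmMeas hZsMeas hZvMeas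
      hIndep hlm.le hls.le hlv hhv.le (by positivity) (by positivity) hahv hbhv hZmCCDF hZsCCDF
      hZvCCDF, ENNReal.toReal_ofReal (by positivity), ha2, hb2]
  congr 2
  ring

theorem stmt2
    {Ω : Type*} [MeasureSpace Ω] [IsProbabilityMeasure (ℙ : Measure Ω)]
    (Zm Zs Zv : Ω → ℝ)
    (hZmMeas : Measurable Zm) (hZsMeas : Measurable Zs) (hZvMeas : Measurable Zv)
    (hIndep : iIndepFun ![Zm, Zs, Zv] ℙ)
    (lm ls lv hm hs hv Pm Ps Pv eta : ℝ)
    (hlm : 0 < lm) (hls : 0 < ls) (hlv : 0 < lv)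
    (hhm : 0 < hm) (hhs : 0 < hs) (hhv : 0 < hv)
    (hPm : 0 < Pm) (hPs : 0 < Ps) (hPv : 0 < Pv)
    (heta : 2 < eta)
    (Psm Pms Pmv Pvm Psv Pvs : ℝ)
    (hPsm : Psm = (Ps / Pm) ^ (2 / eta)) (hPms : Pms = (Pm / Ps) ^ (2 / eta))
    (hPmv : Pmv = (Pm / Pv) ^ (2 / eta)) (hPvm : Pvm = (Pv / Pm) ^ (2 / eta))
    (hPsv : Psv = (Ps / Pv) ^ (2 / eta)) (hPvs : Pvs = (Pv / Ps) ^ (2 / eta))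
    (hZmCCDF : ∀ x : ℝ, ℙ {ω | Zm ω > x} =
      if x < hm then 1 else ENNReal.ofReal (Real.exp (-(π * lm * (x ^ 2 - hm ^ 2)))))
    (hZsCCDF : ∀ x : ℝ, ℙ {ω | Zs ω > x} =
      if x < hs then 1 else ENNReal.ofReal (Real.exp (-(π * ls * (x ^ 2 - hs ^ 2)))))
    (hZvCCDF : ∀ x : ℝ, ℙ {ω | Zv ω > x} =
      if x < hv then 1 else ENNReal.ofReal (Real.exp (-(π * lv * (x ^ 2 - hv ^ 2)))))
    (hsm : hs < hm) (hmv : hm < hv)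
    (hsm2 : hs ^ 2 ≤ Psm * hm ^ 2) (hmv2 : hm ^ 2 ≤ Pmv * hv ^ 2) :
    (ℙ {ω | Pv * Zv ω ^ (-eta) > Pm * Zm ω ^ (-eta) ∧ Pv * Zv ω ^ (-eta) > Ps * Zs ω ^ (-eta)}).toReal =
      lv / (lv + lm * Pmv + ls * Psv) *
      Real.exp (-(π * hv ^ 2 * (lv + lm * Pmv + ls * Psv)) +
        π * (lm * hm ^ 2 + ls * hs ^ 2 + lv * hv ^ 2)) :=
  stmt2_general Zm Zs Zv hZmMeas hZsMeas hZvMeas hIndep lm ls lv hm hs hv Pm Ps Pv eta hlm hls hlv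
    hhm hhs hhv hPm hPs hPv heta Psm Pmv Psv hPsm hPmv hPsv hZmCCDF hZsCCDF hZvCCDF hsm2 hmv2
end

section
/- Under the three-tier association model, define the horizontal serving distance X_s = √(Z_s² − h_s²), L_s1 = √(P_sm·h_m² − h_s²), and L_s2 = √(P_sv·h_v² − h_s²). Then for every x ≥ 0, the joint probability P[X_s ≤ x and the user associates with the small-cell tier] equals ∫₀^x g_s(t) dt, where g_s(t) = 2π·λ_s·t·exp(−π·λ_s·t²) for 0 ≤ t ≤ L_s1; g_s(t) = 2π·λ_s·t·exp(−π·t²·(λ_s + λ_m·P_ms) − π·λ_m·(h_s²·P_ms − h_m²)) for L_s1 < t ≤ L_s2; and g_s(t) = 2π·λ_s·t·exp(−π·t²·(λ_s + λ_m·P_ms + λ_v·P_vs) − π·λ_m·(h_s²·P_ms − h_m²) − π·λ_v·(h_s²·P_vs − h_v²)) for t > L_s2. (Dividing g_s on each range by the corresponding partial association probability A_s1, A_s2, A_s3 yields the paper's conditional PDF f_{X_s}.) -/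
open MeasureTheory ProbabilityTheory Real
open scoped ENNReal

/-! Writing `a_j = √P_js`, the small tier serves iff `Z_m > a_m Z_s` and `Z_v > a_v Z_s`, so by
independence the joint probability is the integral over `Z_s ≤ √(x² + h_s²)` of
`f_{Z_s}(s) P[Z_m > a_m s] P[Z_v > a_v s]`. The substitution `s = √(t² + h_s²)` turns `f_{Z_s}` into
the Rayleigh density `2πλ_s t exp(-πλ_s t²)`, and the factor `P[Z_j > a_j s]` is `1` up to
`t = L_sj = √(P_sj h_j² - h_s²)` and `exp(-πλ_j (P_js (t² + h_s²) - h_j²))` beyond it; multiplying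
out gives the three pieces of `g_s`. -/

/- Density, survival function and law of the distance to the nearest point of a planar Poisson
process of intensity `l`, seen from height `h`; `max c h` makes the survival function `1` below
`h`. -/
noncomputable def nearestDistPDF (l h s : ℝ) : ℝ := 2 * π * l * s * exp (-(π * l * (s ^ 2 - h ^ 2)))

noncomputable def nearestDistCCDF (l h c : ℝ) : ℝ := exp (-(π * l * (max c h ^ 2 - h ^ 2)))

noncomputable def nearestDistMeasure (l h : ℝ) : Measure ℝ :=
  volume.withDensity ((Set.Ici h).indicator fun s => ENNReal.ofReal (nearestDistPDF l h s))

def assocRegion (B a b : ℝ) : Set (ℝ × ℝ × ℝ) := {p | p.1 ≤ B ∧ a * p.1 < p.2.1 ∧ b * p.1 < p.2.2}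

@[fun_prop]
lemma continuous_nearestDistPDF (l h : ℝ) : Continuous (nearestDistPDF l h) := by
  unfold nearestDistPDF; fun_prop

@[fun_prop]
lemma continuous_nearestDistCCDF (l h : ℝ) : Continuous (nearestDistCCDF l h) := by
  unfold nearestDistCCDF; fun_prop

lemma nearestDistPDF_nonneg {l h s : ℝ} (hl : 0 ≤ l) (hs : 0 ≤ s) : 0 ≤ nearestDistPDF l h s := by
  unfold nearestDistPDF; positivity

lemma nearestDistCCDF_nonneg (l h c : ℝ) : 0 ≤ nearestDistCCDF l h c := (exp_pos _).le

lemma nearestDistCCDF_of_le {l h c : ℝ} (hc : c ≤ h) : nearestDistCCDF l h c = 1 := by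
  simp [nearestDistCCDF, max_eq_right hc]

lemma nearestDistCCDF_of_ge {l h c : ℝ} (hc : h ≤ c) :
    nearestDistCCDF l h c = exp (-(π * l * (c ^ 2 - h ^ 2))) := by
  rw [nearestDistCCDF, max_eq_left hc]

lemma map_Ioi_eq_ofReal_nearestDistCCDF {Ω : Type*} [MeasurableSpace Ω] {μ : Measure Ω}
    {Z : Ω → ℝ} (hZ : Measurable Z) {l h : ℝ}
    (hccdf : ∀ x : ℝ, μ {ω | Z ω > x} =
      if x < h then 1 else ENNReal.ofReal (exp (-(π * l * (x ^ 2 - h ^ 2))))) (c : ℝ) :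
    μ.map Z (Set.Ioi c) = ENNReal.ofReal (nearestDistCCDF l h c) := by
  rw [Measure.map_apply hZ measurableSet_Ioi]
  refine (hccdf c).trans ?_
  split_ifs with hc
  · rw [nearestDistCCDF_of_le hc.le, ENNReal.ofReal_one]
  · rw [nearestDistCCDF_of_ge (not_lt.mp hc)]

lemma integral_nearestDistPDF (l h a b : ℝ) :
    ∫ s in a..b, nearestDistPDF l h s =
      exp (-(π * l * (a ^ 2 - h ^ 2))) - exp (-(π * l * (b ^ 2 - h ^ 2))) := by
  have hderiv : ∀ s ∈ Set.uIcc a b,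
      HasDerivAt (fun s => -exp (-(π * l * (s ^ 2 - h ^ 2)))) (nearestDistPDF l h s) s := by
    intro s _
    refine ((((hasDerivAt_pow 2 s).sub_const (h ^ 2)).const_mul (π * l)).neg.exp).neg.congr_deriv ?_
    simp only [nearestDistPDF, Pi.neg_apply]; ring
  rw [intervalIntegral.integral_eq_sub_of_hasDerivAt hderiv
    ((continuous_nearestDistPDF l h).intervalIntegrable a b)]
  ring

lemma setLIntegral_Iic_nearestDistMeasure {l h B : ℝ} (hl : 0 ≤ l) (hh : 0 ≤ h)
    (hB : h ≤ B) {F : ℝ → ℝ} (hF : Continuous F) (hF0 : ∀ s, 0 ≤ F s) :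
    ∫⁻ s in Set.Iic B, ENNReal.ofReal (F s) ∂nearestDistMeasure l h =
      ENNReal.ofReal (∫ s in h..B, nearestDistPDF l h s * F s) := by
  have hcont : Continuous fun s => nearestDistPDF l h s * F s := by fun_prop
  have hnonneg : ∀ s ∈ Set.Ioc h B, 0 ≤ nearestDistPDF l h s * F s := fun s hs =>
    mul_nonneg (nearestDistPDF_nonneg hl (hh.trans hs.1.le)) (hF0 s)
  rw [nearestDistMeasure, setLIntegral_withDensity_eq_setLIntegral_mul _
      ((by fun_prop : Measurable fun s => ENNReal.ofReal (nearestDistPDF l h s)).indicator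
        measurableSet_Ici)
      (by fun_prop) measurableSet_Iic, intervalIntegral.integral_of_le hB,
    ofReal_integral_eq_lintegral_ofReal hcont.integrableOn_Ioc
      ((ae_restrict_iff' measurableSet_Ioc).2 (Filter.Eventually.of_forall hnonneg)),
    setLIntegral_congr Ioc_ae_eq_Icc, ← Set.Ici_inter_Iic,
    ← Measure.restrict_restrict measurableSet_Ici, ← lintegral_indicator measurableSet_Ici]
  refine setLIntegral_congr_fun measurableSet_Iic fun s _ => ?_
  by_cases hs : s ∈ Set.Ici h
  · simp only [Pi.mul_apply, Set.indicator_of_mem hs]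
    rw [ENNReal.ofReal_mul (nearestDistPDF_nonneg hl (hh.trans hs))]
  · simp only [Pi.mul_apply, Set.indicator_of_notMem hs, zero_mul]

lemma eq_nearestDistMeasure (ν : Measure ℝ) [IsProbabilityMeasure ν] {l h : ℝ}
    (hl : 0 ≤ l) (hh : 0 ≤ h) (hν : ∀ c, ν (Set.Ioi c) = ENNReal.ofReal (nearestDistCCDF l h c)) :
    ν = nearestDistMeasure l h := by
  refine Measure.ext_of_Iic _ _ fun a => ?_
  rw [← Set.compl_Ioi, prob_compl_eq_one_sub measurableSet_Ioi, hν a, Set.compl_Ioi]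
  rcases lt_or_ge a h with ha | ha
  · rw [nearestDistCCDF_of_le ha.le, ENNReal.ofReal_one, tsub_self,
      nearestDistMeasure, withDensity_apply _ measurableSet_Iic, eq_comm]
    refine (setLIntegral_congr_fun measurableSet_Iic fun s hs => ?_).trans lintegral_zero
    exact Set.indicator_of_notMem (not_le.mpr (lt_of_le_of_lt hs ha)) _
  · have hint := setLIntegral_Iic_nearestDistMeasure hl hh ha continuous_const
      fun _ => zero_le_one
    simp only [ENNReal.ofReal_one, mul_one, setLIntegral_one] at hint
    rw [nearestDistCCDF_of_ge ha, hint, integral_nearestDistPDF, sub_self, mul_zero, neg_zero,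
      exp_zero, ENNReal.ofReal_sub _ (exp_nonneg _), ENNReal.ofReal_one]

lemma integral_nearestDistPDF_mul_eq_integral_sqrt {l h : ℝ} (hh : 0 < h) (x : ℝ) {F : ℝ → ℝ}
    (hF : Continuous F) :
    ∫ s in h..√(x ^ 2 + h ^ 2), nearestDistPDF l h s * F s =
      ∫ t in 0..x, 2 * π * l * t * exp (-(π * l * t ^ 2)) * F √(t ^ 2 + h ^ 2) := by
  have hpos : ∀ t : ℝ, 0 < t ^ 2 + h ^ 2 := fun t => by positivity
  have hderiv : ∀ t ∈ Set.uIcc 0 x,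
      HasDerivAt (fun t => √(t ^ 2 + h ^ 2)) (t / √(t ^ 2 + h ^ 2)) t := by
    intro t _
    refine (((hasDerivAt_pow 2 t).add_const (h ^ 2)).sqrt (hpos t).ne').congr_deriv ?_
    field_simp
    norm_num
  have hcont : ContinuousOn (fun t => t / √(t ^ 2 + h ^ 2)) (Set.uIcc 0 x) :=
    (continuous_id.div (by fun_prop) fun t => (sqrt_pos.2 (hpos t)).ne').continuousOn
  have hφ0 : √((0 : ℝ) ^ 2 + h ^ 2) = h := by simp [sqrt_sq hh.le]
  have hsub := intervalIntegral.integral_comp_mul_deriv hderiv hcont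
    (g := fun s => nearestDistPDF l h s * F s) (by fun_prop)
  beta_reduce at hsub
  rw [hφ0] at hsub
  rw [← hsub]
  refine intervalIntegral.integral_congr fun t _ => ?_
  have hφ : √(t ^ 2 + h ^ 2) ≠ 0 := (sqrt_pos.2 (hpos t)).ne'
  simp only [Function.comp_apply, nearestDistPDF, sq_sqrt (hpos t).le, add_sub_cancel_right]
  field_simp

lemma measurableSet_assocRegion (B a b : ℝ) : MeasurableSet (assocRegion B a b) :=
  (measurableSet_le measurable_fst measurable_const).inter
    ((measurableSet_lt (measurable_fst.const_mul a) (measurable_fst.comp measurable_snd)).inter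
      (measurableSet_lt (measurable_fst.const_mul b) (measurable_snd.comp measurable_snd)))

lemma prod_prod_assocRegion (μ ν ρ : Measure ℝ) [SFinite ν] [SFinite ρ] (B a b : ℝ) :
    (μ.prod (ν.prod ρ)) (assocRegion B a b) =
      ∫⁻ s in Set.Iic B, ν (Set.Ioi (a * s)) * ρ (Set.Ioi (b * s)) ∂μ := by
  rw [Measure.prod_apply (measurableSet_assocRegion B a b), ← lintegral_indicator measurableSet_Iic]
  refine lintegral_congr fun s => ?_
  by_cases hs : s ≤ B
  · have hslice : Prod.mk s ⁻¹' assocRegion B a b = Set.Ioi (a * s) ×ˢ Set.Ioi (b * s) := by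
      ext; simp [assocRegion, hs]
    rw [hslice, Measure.prod_prod, Set.indicator_of_mem (Set.mem_Iic.2 hs)]
  · have hslice : Prod.mk s ⁻¹' assocRegion B a b = ∅ := by
      ext; simp [assocRegion, hs]
    rw [hslice, measure_empty, Set.indicator_of_notMem (by simpa using hs)]

lemma map_prodMk_eq_prod_of_iIndepFun {Ω β : Type*} [MeasurableSpace Ω] [MeasurableSpace β]
    {μ : Measure Ω} [IsFiniteMeasure μ] {X Y W : Ω → β}
    (hX : Measurable X) (hY : Measurable Y) (hW : Measurable W) (h : iIndepFun ![X, Y, W] μ) :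
    μ.map (fun ω => (Y ω, X ω, W ω)) = (μ.map Y).prod ((μ.map X).prod (μ.map W)) := by
  have hmeas : ∀ i, Measurable (![X, Y, W] i) := fun i => by fin_cases i <;> assumption
  have hXW : μ.map (fun ω => (X ω, W ω)) = (μ.map X).prod (μ.map W) :=
    (h.indepFun (show (0 : Fin 3) ≠ 2 by decide)).map_prod_eq_prod_map_map
      hX.aemeasurable hW.aemeasurable
  rw [(h.indepFun_prodMk hmeas 0 2 1 (by decide) (by decide)).symm.map_prod_eq_prod_map_map
    hY.aemeasurable (hX.prodMk hW).aemeasurable, hXW]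

lemma mul_rpow_neg_lt_iff {P₁ P₂ η s m : ℝ} (hP₁ : 0 < P₁) (hP₂ : 0 < P₂) (hη : 0 < η)
    (hs : 0 < s) (hm : 0 < m) :
    P₁ * s ^ (-η) > P₂ * m ^ (-η) ↔ √((P₂ / P₁) ^ (2 / η)) * s < m := by
  have hr : 0 < P₂ / P₁ := div_pos hP₂ hP₁
  have hroot : √((P₂ / P₁) ^ (2 / η)) = (P₂ / P₁) ^ η⁻¹ := by
    rw [sqrt_eq_rpow, ← rpow_mul hr.le]
    ring_nf
  -- raising to the power `η`, both sides become `P₂ * s ^ η < P₁ * m ^ η`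
  rw [hroot, ← rpow_lt_rpow_iff (by positivity) hm.le hη, mul_rpow (by positivity) hs.le,
    ← rpow_mul hr.le, inv_mul_cancel₀ hη.ne', rpow_one, rpow_neg hs.le, rpow_neg hm.le,
    gt_iff_lt, ← div_eq_mul_inv, ← div_eq_mul_inv, div_lt_div_iff₀ (by positivity) (by positivity),
    div_mul_eq_mul_div, div_lt_iff₀ hP₁, mul_comm (m ^ η)]

lemma ae_pos_of_ccdf {Ω : Type*} [MeasurableSpace Ω] {μ : Measure Ω} [IsProbabilityMeasure μ]
    {Z : Ω → ℝ} (hZ : Measurable Z) {l h : ℝ} (hh : 0 < h)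
    (hccdf : ∀ x : ℝ, μ {ω | Z ω > x} =
      if x < h then 1 else ENNReal.ofReal (exp (-(π * l * (x ^ 2 - h ^ 2))))) :
    ∀ᵐ ω ∂μ, 0 < Z ω :=
  (ae_iff_measure_eq (hZ measurableSet_Ioi).nullMeasurableSet).2 <| by
    rw [measure_univ]; exact (hccdf 0).trans (if_pos hh)

lemma assocEvent_ae_eq_preimage_assocRegion {Ω : Type*} [MeasurableSpace Ω] {μ : Measure Ω}
    {Zm Zs Zv : Ω → ℝ} (hZm : ∀ᵐ ω ∂μ, 0 < Zm ω) (hZs : ∀ᵐ ω ∂μ, 0 < Zs ω)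
    (hZv : ∀ᵐ ω ∂μ, 0 < Zv ω) {hs Pm Ps Pv η x : ℝ} (hPm : 0 < Pm) (hPs : 0 < Ps) (hPv : 0 < Pv)
    (hη : 0 < η) (hx : 0 ≤ x) :
    ({ω | √(Zs ω ^ 2 - hs ^ 2) ≤ x} ∩
        {ω | Ps * Zs ω ^ (-η) > Pm * Zm ω ^ (-η) ∧ Ps * Zs ω ^ (-η) > Pv * Zv ω ^ (-η)} : Set Ω)
      =ᵐ[μ] (fun ω => (Zs ω, Zm ω, Zv ω)) ⁻¹'
        assocRegion √(x ^ 2 + hs ^ 2) √((Pm / Ps) ^ (2 / η)) √((Pv / Ps) ^ (2 / η)) := by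
  refine Filter.eventuallyEq_set.2 ?_
  filter_upwards [hZm, hZs, hZv] with ω hZmω hZsω hZvω
  have hdist : √(Zs ω ^ 2 - hs ^ 2) ≤ x ↔ Zs ω ≤ √(x ^ 2 + hs ^ 2) := by
    rw [sqrt_le_left hx, le_sqrt hZsω.le (by positivity), sub_le_iff_le_add]
  simp only [assocRegion, Set.mem_inter_iff, Set.mem_ofPred_eq, Set.mem_preimage, hdist,
    mul_rpow_neg_lt_iff hPs hPm hη hZsω hZmω, mul_rpow_neg_lt_iff hPs hPv hη hZsω hZvω]

lemma measure_preimage_assocRegion_toReal {Ω : Type*} [MeasurableSpace Ω] {μ : Measure Ω}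
    [IsProbabilityMeasure μ] {Zm Zs Zv : Ω → ℝ} (hZm : Measurable Zm) (hZs : Measurable Zs)
    (hZv : Measurable Zv) (hIndep : iIndepFun ![Zm, Zs, Zv] μ) {lm ls lv hm hs hv : ℝ}
    (hls : 0 ≤ ls) (hhs : 0 < hs)
    (hZmCCDF : ∀ x : ℝ, μ {ω | Zm ω > x} =
      if x < hm then 1 else ENNReal.ofReal (exp (-(π * lm * (x ^ 2 - hm ^ 2)))))
    (hZsCCDF : ∀ x : ℝ, μ {ω | Zs ω > x} =
      if x < hs then 1 else ENNReal.ofReal (exp (-(π * ls * (x ^ 2 - hs ^ 2)))))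
    (hZvCCDF : ∀ x : ℝ, μ {ω | Zv ω > x} =
      if x < hv then 1 else ENNReal.ofReal (exp (-(π * lv * (x ^ 2 - hv ^ 2)))))
    (am av x : ℝ) :
    (μ ((fun ω => (Zs ω, Zm ω, Zv ω)) ⁻¹' assocRegion √(x ^ 2 + hs ^ 2) am av)).toReal =
      ∫ t in 0..x, 2 * π * ls * t * exp (-(π * ls * t ^ 2)) *
        (nearestDistCCDF lm hm (am * √(t ^ 2 + hs ^ 2)) *
          nearestDistCCDF lv hv (av * √(t ^ 2 + hs ^ 2))) := by
  have := Measure.isProbabilityMeasure_map (μ := μ) hZs.aemeasurable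
  have hB : hs ≤ √(x ^ 2 + hs ^ 2) := le_sqrt_of_sq_le (by nlinarith)
  have hF : Continuous fun s => nearestDistCCDF lm hm (am * s) * nearestDistCCDF lv hv (av * s) :=
    by fun_prop
  have hF0 : ∀ s, 0 ≤ nearestDistCCDF lm hm (am * s) * nearestDistCCDF lv hv (av * s) := fun s =>
    mul_nonneg (nearestDistCCDF_nonneg _ _ _) (nearestDistCCDF_nonneg _ _ _)
  rw [← Measure.map_apply (hZs.prodMk (hZm.prodMk hZv)) (measurableSet_assocRegion _ _ _),
    map_prodMk_eq_prod_of_iIndepFun hZm hZs hZv hIndep, prod_prod_assocRegion,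
    eq_nearestDistMeasure (μ.map Zs) hls hhs.le
      (map_Ioi_eq_ofReal_nearestDistCCDF hZs hZsCCDF)]
  simp_rw [map_Ioi_eq_ofReal_nearestDistCCDF hZm hZmCCDF,
    map_Ioi_eq_ofReal_nearestDistCCDF hZv hZvCCDF,
    ← ENNReal.ofReal_mul (nearestDistCCDF_nonneg _ _ _)]
  rw [setLIntegral_Iic_nearestDistMeasure hls hhs.le hB hF hF0,
    ENNReal.toReal_ofReal (intervalIntegral.integral_nonneg hB fun s hs' =>
      mul_nonneg (nearestDistPDF_nonneg hls (hhs.le.trans hs'.1)) (hF0 s)),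
    integral_nearestDistPDF_mul_eq_integral_sqrt hhs x hF]

lemma nearestDistCCDF_sqrt_mul_sqrt {l h hs P t : ℝ} (hh : 0 ≤ h) (hP : 0 < P) (ht : 0 < t) :
    nearestDistCCDF l h (√P * √(t ^ 2 + hs ^ 2)) =
      if t ≤ √(P⁻¹ * h ^ 2 - hs ^ 2) then 1
      else exp (-(π * l * (P * (t ^ 2 + hs ^ 2) - h ^ 2))) := by
  have hiff : t ≤ √(P⁻¹ * h ^ 2 - hs ^ 2) ↔ √(P * (t ^ 2 + hs ^ 2)) ≤ h := by
    rw [le_sqrt' ht, sqrt_le_left hh, le_sub_iff_add_le, le_inv_mul_iff₀ hP]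
  rw [← sqrt_mul hP.le]
  split_ifs with hle
  · exact nearestDistCCDF_of_le (hiff.1 hle)
  · rw [nearestDistCCDF_of_ge (not_le.1 (hiff.not.1 hle)).le, sq_sqrt (by positivity)]

lemma mul_ite_mul_ite_eq_piecewise {ls lm lv hs hm hv Pms Pvs L₁ L₂ t : ℝ} (hL : L₁ ≤ L₂) :
    2 * π * ls * t * exp (-(π * ls * t ^ 2)) *
        ((if t ≤ L₁ then 1 else exp (-(π * lm * (Pms * (t ^ 2 + hs ^ 2) - hm ^ 2)))) *
          (if t ≤ L₂ then 1 else exp (-(π * lv * (Pvs * (t ^ 2 + hs ^ 2) - hv ^ 2))))) =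
      if t ≤ L₁ then
        2 * π * ls * t * exp (-(π * ls * t ^ 2))
      else if t ≤ L₂ then
        2 * π * ls * t * exp (-(π * t ^ 2 * (ls + lm * Pms)) - π * lm * (hs ^ 2 * Pms - hm ^ 2))
      else
        2 * π * ls * t * exp (-(π * t ^ 2 * (ls + lm * Pms + lv * Pvs)) -
          π * lm * (hs ^ 2 * Pms - hm ^ 2) - π * lv * (hs ^ 2 * Pvs - hv ^ 2)) := by
  split_ifs with h₁ h₂ h₂
  · ring
  · exact absurd (h₁.trans hL) h₂
  · rw [mul_one, mul_assoc, ← exp_add]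
    ring_nf
  · rw [mul_assoc, ← exp_add, ← exp_add]
    ring_nf

theorem stmt5_general
    {Ω : Type*} [MeasureSpace Ω] [IsProbabilityMeasure (ℙ : Measure Ω)]
    (Zm Zs Zv : Ω → ℝ)
    (hZmMeas : Measurable Zm) (hZsMeas : Measurable Zs) (hZvMeas : Measurable Zv)
    (hIndep : iIndepFun ![Zm, Zs, Zv] ℙ)
    (lm ls lv hm hs hv Pm Ps Pv eta : ℝ)
    (hls : 0 < ls)
    (hhm : 0 < hm) (hhs : 0 < hs) (hhv : 0 < hv)
    (hPm : 0 < Pm) (hPs : 0 < Ps) (hPv : 0 < Pv)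
    (heta : 2 < eta)
    (Psm Pms Pmv Psv Pvs : ℝ)
    (hPsm : Psm = (Ps / Pm) ^ (2 / eta)) (hPms : Pms = (Pm / Ps) ^ (2 / eta))
    (hPmv : Pmv = (Pm / Pv) ^ (2 / eta))
    (hPsv : Psv = (Ps / Pv) ^ (2 / eta)) (hPvs : Pvs = (Pv / Ps) ^ (2 / eta))
    (hZmCCDF : ∀ x : ℝ, ℙ {ω | Zm ω > x} =
      if x < hm then 1 else ENNReal.ofReal (Real.exp (-(π * lm * (x ^ 2 - hm ^ 2)))))
    (hZsCCDF : ∀ x : ℝ, ℙ {ω | Zs ω > x} =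
      if x < hs then 1 else ENNReal.ofReal (Real.exp (-(π * ls * (x ^ 2 - hs ^ 2)))))
    (hZvCCDF : ∀ x : ℝ, ℙ {ω | Zv ω > x} =
      if x < hv then 1 else ENNReal.ofReal (Real.exp (-(π * lv * (x ^ 2 - hv ^ 2)))))
    (hmv2 : hm ^ 2 ≤ Pmv * hv ^ 2)
    (x : ℝ) (hx : 0 ≤ x)
    (g : ℝ → ℝ)
    (hg : ∀ t : ℝ, g t =
      if t ≤ Real.sqrt (Psm * hm ^ 2 - hs ^ 2) then
        2 * π * ls * t * Real.exp (-(π * ls * t ^ 2))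
      else if t ≤ Real.sqrt (Psv * hv ^ 2 - hs ^ 2) then
        2 * π * ls * t * Real.exp (-(π * t ^ 2 * (ls + lm * Pms)) - π * lm * (hs ^ 2 * Pms - hm ^ 2))
      else
        2 * π * ls * t * Real.exp (-(π * t ^ 2 * (ls + lm * Pms + lv * Pvs)) -
          π * lm * (hs ^ 2 * Pms - hm ^ 2) - π * lv * (hs ^ 2 * Pvs - hv ^ 2))) :
    (ℙ ({ω | Real.sqrt (Zs ω ^ 2 - hs ^ 2) ≤ x} ∩ {ω | Ps * Zs ω ^ (-eta) > Pm * Zm ω ^ (-eta) ∧ Ps * Zs ω ^ (-eta) > Pv * Zv ω ^ (-eta)})).toReal =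
      ∫ t in (0:ℝ)..x, g t := by
  have hη : 0 < eta := by linarith
  have hPms0 : 0 < Pms := hPms ▸ rpow_pos_of_pos (div_pos hPm hPs) _
  have hPvs0 : 0 < Pvs := hPvs ▸ rpow_pos_of_pos (div_pos hPv hPs) _
  have hPsm' : Psm = Pms⁻¹ := by rw [hPsm, hPms, ← inv_rpow (div_pos hPm hPs).le, inv_div]
  have hPsv' : Psv = Pvs⁻¹ := by rw [hPsv, hPvs, ← inv_rpow (div_pos hPv hPs).le, inv_div]
  have hL : √(Psm * hm ^ 2 - hs ^ 2) ≤ √(Psv * hv ^ 2 - hs ^ 2) := by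
    have hPsv_eq : Psv = Psm * Pmv := by
      rw [hPsv, hPsm, hPmv, ← mul_rpow (div_pos hPs hPm).le (div_pos hPm hPv).le,
        div_mul_div_cancel₀ hPm.ne']
    rw [hPsv_eq, mul_assoc]
    gcongr
    exact (hPsm' ▸ inv_pos.2 hPms0).le
  rw [measure_congr (assocEvent_ae_eq_preimage_assocRegion (ae_pos_of_ccdf hZmMeas hhm hZmCCDF)
      (ae_pos_of_ccdf hZsMeas hhs hZsCCDF) (ae_pos_of_ccdf hZvMeas hhv hZvCCDF) hPm hPs hPv hη hx),
    ← hPms, ← hPvs, measure_preimage_assocRegion_toReal hZmMeas hZsMeas hZvMeas hIndep hls.le hhs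
      hZmCCDF hZsCCDF hZvCCDF]
  refine intervalIntegral.integral_congr fun t ht => ?_
  rcases (Set.uIcc_of_le hx ▸ ht).1.eq_or_lt with rfl | ht0
  · simp [hg]
  · rw [hg t, nearestDistCCDF_sqrt_mul_sqrt hhm.le hPms0 ht0,
      nearestDistCCDF_sqrt_mul_sqrt hhv.le hPvs0 ht0, ← hPsm', ← hPsv']
    exact mul_ite_mul_ite_eq_piecewise hL

theorem stmt5
    {Ω : Type*} [MeasureSpace Ω] [IsProbabilityMeasure (ℙ : Measure Ω)]
    (Zm Zs Zv : Ω → ℝ)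
    (hZmMeas : Measurable Zm) (hZsMeas : Measurable Zs) (hZvMeas : Measurable Zv)
    (hIndep : iIndepFun ![Zm, Zs, Zv] ℙ)
    (lm ls lv hm hs hv Pm Ps Pv eta : ℝ)
    (hlm : 0 < lm) (hls : 0 < ls) (hlv : 0 < lv)
    (hhm : 0 < hm) (hhs : 0 < hs) (hhv : 0 < hv)
    (hPm : 0 < Pm) (hPs : 0 < Ps) (hPv : 0 < Pv)
    (heta : 2 < eta)
    (Psm Pms Pmv Pvm Psv Pvs : ℝ)
    (hPsm : Psm = (Ps / Pm) ^ (2 / eta)) (hPms : Pms = (Pm / Ps) ^ (2 / eta))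
    (hPmv : Pmv = (Pm / Pv) ^ (2 / eta)) (hPvm : Pvm = (Pv / Pm) ^ (2 / eta))
    (hPsv : Psv = (Ps / Pv) ^ (2 / eta)) (hPvs : Pvs = (Pv / Ps) ^ (2 / eta))
    (hZmCCDF : ∀ x : ℝ, ℙ {ω | Zm ω > x} =
      if x < hm then 1 else ENNReal.ofReal (Real.exp (-(π * lm * (x ^ 2 - hm ^ 2)))))
    (hZsCCDF : ∀ x : ℝ, ℙ {ω | Zs ω > x} =
      if x < hs then 1 else ENNReal.ofReal (Real.exp (-(π * ls * (x ^ 2 - hs ^ 2)))))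
    (hZvCCDF : ∀ x : ℝ, ℙ {ω | Zv ω > x} =
      if x < hv then 1 else ENNReal.ofReal (Real.exp (-(π * lv * (x ^ 2 - hv ^ 2)))))
    (hsm : hs < hm) (hmv : hm < hv)
    (hsm2 : hs ^ 2 ≤ Psm * hm ^ 2) (hmv2 : hm ^ 2 ≤ Pmv * hv ^ 2)
    (x : ℝ) (hx : 0 ≤ x)
    (g : ℝ → ℝ)
    (hg : ∀ t : ℝ, g t =
      if t ≤ Real.sqrt (Psm * hm ^ 2 - hs ^ 2) then
        2 * π * ls * t * Real.exp (-(π * ls * t ^ 2))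
      else if t ≤ Real.sqrt (Psv * hv ^ 2 - hs ^ 2) then
        2 * π * ls * t * Real.exp (-(π * t ^ 2 * (ls + lm * Pms)) - π * lm * (hs ^ 2 * Pms - hm ^ 2))
      else
        2 * π * ls * t * Real.exp (-(π * t ^ 2 * (ls + lm * Pms + lv * Pvs)) -
          π * lm * (hs ^ 2 * Pms - hm ^ 2) - π * lv * (hs ^ 2 * Pvs - hv ^ 2))) :
    (ℙ ({ω | Real.sqrt (Zs ω ^ 2 - hs ^ 2) ≤ x} ∩ {ω | Ps * Zs ω ^ (-eta) > Pm * Zm ω ^ (-eta) ∧ Ps * Zs ω ^ (-eta) > Pv * Zv ω ^ (-eta)})).toReal =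
      ∫ t in (0:ℝ)..x, g t :=
  stmt5_general Zm Zs Zv hZmMeas hZsMeas hZvMeas hIndep lm ls lv hm hs hv Pm Ps Pv eta hls hhm hhs
    hhv hPm hPs hPv heta Psm Pms Pmv Psv Pvs hPsm hPms hPmv hPsv hPvs hZmCCDF hZsCCDF hZvCCDF hmv2 x
    hx g hg
end

section
/- Under the three-tier association model, define the horizontal serving distance X_v = √(Z_v² − h_v²). Then conditional on the event that the user associates with the UAV tier, X_v has probability density f_{X_v}(x) = (2π·λ_v/A_v)·x·exp(−π·x²·(λ_v + λ_m·P_mv + λ_s·P_sv) − π·λ_m·(h_v²·P_mv − h_m²) − π·λ_s·(h_v²·P_sv − h_s²)) for x ≥ 0; equivalently, for every x ≥ 0, P[X_v ≤ x and UAV association] = ∫₀^x 2π·λ_v·t·exp(−π·t²·(λ_v + λ_m·P_mv + λ_s·P_sv) − π·λ_m·(h_v²·P_mv − h_m²) − π·λ_s·(h_v²·P_sv − h_s²)) dt. -/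
/-!
Almost surely every `Z_k` exceeds `h_k > 0`, so the UAV association event is
`{a Z_v < Z_m, b Z_v < Z_s}` with `a² = P_mv`, `b² = P_sv`, and `X_v ≤ x` means
`Z_v ≤ √(x² + h_v²)`. By independence, given `Z_v = z` the event has probability
`P[Z_m > a z] P[Z_s > b z]`; the height conditions put `a z ≥ h_m` and `b z ≥ h_s`, where both
tails are Gaussian in `z`. Against the density of `Z_v` the integrand becomes `K z exp(c z² + d)`,
and its integral over `[h_v, √(x² + h_v²)]` equals the one over `[0, x]` after `z² = t² + h_v²`.
-/

open MeasureTheory ProbabilityTheory Real Set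
open scoped ENNReal

lemma lt_mul_rpow_neg_iff {P Q z w η : ℝ} (hP : 0 < P) (hQ : 0 < Q) (hz : 0 < z) (hw : 0 < w)
    (hη : 0 < η) : P * w ^ (-η) < Q * z ^ (-η) ↔ (P / Q) ^ η⁻¹ * z < w :=
  calc P * w ^ (-η) < Q * z ^ (-η) ↔ P / Q < (w / z) ^ η := by
        rw [rpow_neg hw.le, rpow_neg hz.le, div_rpow hw.le hz.le, ← div_eq_mul_inv,
          ← div_eq_mul_inv, div_lt_div_iff₀ (rpow_pos_of_pos hw η) (rpow_pos_of_pos hz η),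
          div_lt_div_iff₀ hQ (rpow_pos_of_pos hz η), mul_comm Q]
    _ ↔ (P / Q) ^ η⁻¹ < w / z := (rpow_inv_lt_iff_of_pos (by positivity) (by positivity) hη).symm
    _ ↔ (P / Q) ^ η⁻¹ * z < w := lt_div_iff₀ hz

lemma sq_rpow_inv {r : ℝ} (hr : 0 ≤ r) (η : ℝ) : (r ^ η⁻¹) ^ 2 = r ^ (2 / η) := by
  rw [← rpow_natCast, ← rpow_mul hr]
  congr 1
  push_cast
  ring

lemma le_rpow_inv_mul_of_sq_le {h h' r η : ℝ} (hh : 0 ≤ h) (hh' : 0 ≤ h') (hr : 0 ≤ r)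
    (hsq : h ^ 2 ≤ r ^ (2 / η) * h' ^ 2) : h ≤ r ^ η⁻¹ * h' :=
  (pow_le_pow_iff_left₀ hh (by positivity) two_ne_zero).1 (by rwa [mul_pow, sq_rpow_inv hr])

lemma sq_le_div_rpow_mul_sq_trans {P₁ P₂ P₃ h₁ h₂ h₃ η : ℝ} (hP₁ : 0 ≤ P₁) (hP₂ : 0 < P₂)
    (hP₃ : 0 ≤ P₃) (h₁₂ : h₁ ^ 2 ≤ (P₁ / P₂) ^ (2 / η) * h₂ ^ 2)
    (h₂₃ : h₂ ^ 2 ≤ (P₂ / P₃) ^ (2 / η) * h₃ ^ 2) : h₁ ^ 2 ≤ (P₁ / P₃) ^ (2 / η) * h₃ ^ 2 :=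
  calc h₁ ^ 2 ≤ (P₁ / P₂) ^ (2 / η) * ((P₂ / P₃) ^ (2 / η) * h₃ ^ 2) :=
        h₁₂.trans (mul_le_mul_of_nonneg_left h₂₃ (by positivity))
    _ = (P₁ / P₃) ^ (2 / η) * h₃ ^ 2 := by
        rw [← mul_assoc, ← mul_rpow (by positivity) (by positivity), div_mul_div_cancel₀ hP₂.ne']

lemma sqrt_sq_sub_sq_le_iff {z h x : ℝ} (hz : 0 ≤ z) (hx : 0 ≤ x) :
    √(z ^ 2 - h ^ 2) ≤ x ↔ z ≤ √(x ^ 2 + h ^ 2) := by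
  rw [sqrt_le_left hx, le_sqrt hz (by positivity)]
  constructor <;> intro hle <;> linarith

lemma integral_mul_exp_quadratic (K c d u v : ℝ) (hc : c ≠ 0) :
    ∫ z in u..v, K * z * exp (c * z ^ 2 + d) =
      K * (exp (c * v ^ 2 + d) - exp (c * u ^ 2 + d)) / (2 * c) := by
  have hderiv (z : ℝ) :
      HasDerivAt (fun z => K * exp (c * z ^ 2 + d) / (2 * c)) (K * z * exp (c * z ^ 2 + d)) z := by
    have hquad : HasDerivAt (fun z => c * z ^ 2 + d) (c * (2 * z)) z := by
      simpa using ((hasDerivAt_pow 2 z).const_mul c).add_const d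
    refine ((hquad.exp.const_mul K).div_const (2 * c)).congr_deriv ?_
    field_simp
  rw [intervalIntegral.integral_eq_sub_of_hasDerivAt (fun z _ => hderiv z)
    ((by fun_prop : Continuous fun z => K * z * exp (c * z ^ 2 + d)).intervalIntegrable u v)]
  ring

lemma integral_mul_exp_quadratic_sqrt (K c d h x : ℝ) (hc : c ≠ 0) :
    ∫ z in h..√(x ^ 2 + h ^ 2), K * z * exp (c * z ^ 2 + d) =
      ∫ t in 0..x, K * t * exp (c * t ^ 2 + (c * h ^ 2 + d)) := by
  rw [integral_mul_exp_quadratic _ _ _ _ _ hc, integral_mul_exp_quadratic _ _ _ _ _ hc,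
    sq_sqrt (by positivity)]
  ring_nf

noncomputable section

/-- Tail of the distance to the nearest point of a planar Poisson process of intensity `l`,
seen from height `h`. -/
def elevatedRayleighCcdf (l h x : ℝ) : ℝ≥0∞ :=
  if x < h then 1 else ENNReal.ofReal (exp (-(π * l * (x ^ 2 - h ^ 2))))

def elevatedRayleighPdf (l h z : ℝ) : ℝ :=
  2 * π * l * z * exp (-(π * l * (z ^ 2 - h ^ 2)))

end

lemma continuous_elevatedRayleighPdf (l h : ℝ) : Continuous (elevatedRayleighPdf l h) := by
  unfold elevatedRayleighPdf
  fun_prop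

lemma elevatedRayleighPdf_nonneg {l z : ℝ} (hl : 0 ≤ l) (h : ℝ) (hz : 0 ≤ z) :
    0 ≤ elevatedRayleighPdf l h z := by
  unfold elevatedRayleighPdf
  positivity

lemma integral_elevatedRayleighPdf {l : ℝ} (hl : l ≠ 0) (h a : ℝ) :
    ∫ z in h..a, elevatedRayleighPdf l h z = 1 - exp (-(π * l * (a ^ 2 - h ^ 2))) := by
  have hpdf (z : ℝ) : elevatedRayleighPdf l h z =
      2 * π * l * z * exp (-(π * l) * z ^ 2 + π * l * h ^ 2) := by
    rw [elevatedRayleighPdf]; ring_nf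
  rw [intervalIntegral.integral_congr fun z _ => hpdf z,
    integral_mul_exp_quadratic _ _ _ _ _ (by simp [hl, pi_ne_zero]), show -(π * l) * h ^ 2 + π * l * h ^ 2 = 0 by ring, exp_zero]
  field_simp
  ring_nf

section RandomVariable

variable {Ω : Type*} [MeasurableSpace Ω] {μ : Measure Ω} [IsProbabilityMeasure μ]

lemma ae_lt_of_ccdf {Z : Ω → ℝ} (hZ : Measurable Z) {l h : ℝ}
    (hccdf : ∀ x, μ {ω | x < Z ω} = elevatedRayleighCcdf l h x) : ∀ᵐ ω ∂μ, h < Z ω := by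
  have hone : μ {ω | h < Z ω} = 1 := by simp [hccdf, elevatedRayleighCcdf]
  rw [ae_iff, ← (prob_compl_eq_zero_iff (hZ measurableSet_Ioi)).2 hone]
  rfl

lemma map_eq_withDensity_of_ccdf {Z : Ω → ℝ} (hZ : Measurable Z) {l h : ℝ} (hl : 0 < l)
    (hh : 0 ≤ h) (hccdf : ∀ x, μ {ω | x < Z ω} = elevatedRayleighCcdf l h x) :
    μ.map Z = volume.withDensity
      ((Ioi h).indicator fun z => ENNReal.ofReal (elevatedRayleighPdf l h z)) := by
  have : IsProbabilityMeasure (μ.map Z) := Measure.isProbabilityMeasure_map hZ.aemeasurable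
  refine Measure.ext_of_Iic _ _ fun a => ?_
  have hcdf : μ.map Z (Iic a) = 1 - elevatedRayleighCcdf l h a := by
    have hcompl : Z ⁻¹' Iic a = {ω | a < Z ω}ᶜ := by ext; simp
    rw [Measure.map_apply hZ measurableSet_Iic, hcompl,
      prob_compl_eq_one_sub (measurableSet_lt measurable_const hZ), hccdf]
  rw [hcdf, withDensity_apply _ measurableSet_Iic, setLIntegral_indicator measurableSet_Ioi,
    Ioi_inter_Iic, elevatedRayleighCcdf]
  split_ifs with hah
  · simp [Ioc_eq_empty (not_lt.2 hah.le)]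
  · rw [← ofReal_integral_eq_lintegral_ofReal, ← intervalIntegral.integral_of_le (not_lt.1 hah),
      integral_elevatedRayleighPdf hl.ne', ENNReal.ofReal_sub _ (exp_pos _).le, ENNReal.ofReal_one]
    · exact (continuous_elevatedRayleighPdf l h).integrableOn_Ioc
    · exact (ae_restrict_iff' measurableSet_Ioc).2 (.of_forall fun z hz =>
        elevatedRayleighPdf_nonneg hl.le h (hh.trans hz.1.le))

end RandomVariable

section Independence

variable {Ω : Type*} [MeasurableSpace Ω] {μ : Measure Ω}

lemma measure_prodMk_preimage_eq_lintegral_of_indepFun [IsFiniteMeasure μ] {α β : Type*}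
    [MeasurableSpace α] [MeasurableSpace β] {X : Ω → α} {Y : Ω → β} (hX : Measurable X)
    (hY : Measurable Y) (hXY : IndepFun X Y μ) {S : Set (α × β)} (hS : MeasurableSet S) :
    μ ((fun ω => (X ω, Y ω)) ⁻¹' S) = ∫⁻ x, μ.map Y (Prod.mk x ⁻¹' S) ∂μ.map X := by
  rw [← Measure.map_apply (hX.prodMk hY) hS,
    (indepFun_iff_map_prod_eq_prod_map_map hX.aemeasurable hY.aemeasurable).1 hXY,
    Measure.prod_apply hS]

lemma measure_mem_and_lt_and_lt_eq_lintegral [IsProbabilityMeasure μ] {X Y W : Ω → ℝ}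
    (hX : Measurable X) (hY : Measurable Y) (hW : Measurable W) (hind : iIndepFun ![Y, W, X] μ)
    {s : Set ℝ} (hs : MeasurableSet s) {f g : ℝ → ℝ} (hf : Measurable f) (hg : Measurable g) :
    μ {ω | X ω ∈ s ∧ f (X ω) < Y ω ∧ g (X ω) < W ω} =
      ∫⁻ z in s, μ {ω | f z < Y ω} * μ {ω | g z < W ω} ∂μ.map X := by
  have hmeas : ∀ i, Measurable (![Y, W, X] i) := by
    intro i; fin_cases i <;> assumption
  have hX_YW : IndepFun X (fun ω => (Y ω, W ω)) μ :=
    (hind.indepFun_prodMk hmeas 0 1 2 (by decide) (by decide)).symm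
  have hYW : IndepFun Y W μ := hind.indepFun (i := 0) (j := 1) (by decide)
  set S : Set (ℝ × ℝ × ℝ) := {p | p.1 ∈ s ∧ f p.1 < p.2.1 ∧ g p.1 < p.2.2}
  have hS : MeasurableSet S :=
    (measurable_fst hs).inter ((measurableSet_lt (hf.comp measurable_fst)
      (measurable_fst.comp measurable_snd)).inter
      (measurableSet_lt (hg.comp measurable_fst) (measurable_snd.comp measurable_snd)))
  have hslice (z : ℝ) : μ.map (fun ω => (Y ω, W ω)) (Prod.mk z ⁻¹' S) =
      s.indicator (fun z => μ {ω | f z < Y ω} * μ {ω | g z < W ω}) z := by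
    by_cases hz : z ∈ s
    · have : Prod.mk z ⁻¹' S = Ioi (f z) ×ˢ Ioi (g z) := by ext; simp [S, hz]
      rw [this, (indepFun_iff_map_prod_eq_prod_map_map hY.aemeasurable hW.aemeasurable).1 hYW,
        Measure.prod_prod, Measure.map_apply hY measurableSet_Ioi,
        Measure.map_apply hW measurableSet_Ioi, indicator_of_mem hz]
      rfl
    · have : Prod.mk z ⁻¹' S = ∅ := by ext; simp [S, hz]
      simp [this, hz]
  rw [← lintegral_indicator hs, ← lintegral_congr hslice,
    ← measure_prodMk_preimage_eq_lintegral_of_indepFun hX (hY.prodMk hW) hX_YW hS]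
  rfl

end Independence

section ThreeTier

variable {Ω : Type*} [MeasurableSpace Ω] {μ : Measure Ω}

lemma measurable_measure_const_mul_lt {Y : Ω → ℝ} {a : ℝ} (ha : 0 ≤ a) :
    Measurable fun z => μ {ω | a * z < Y ω} :=
  Antitone.measurable fun _ _ hzz' =>
    measure_mono fun _ hω => lt_of_le_of_lt (mul_le_mul_of_nonneg_left hzz' ha) hω

lemma sqrt_le_and_association_ae_eq {Zm Zs Zv : Ω → ℝ} (hZm : ∀ᵐ ω ∂μ, 0 < Zm ω)
    (hZs : ∀ᵐ ω ∂μ, 0 < Zs ω) (hZv : ∀ᵐ ω ∂μ, 0 < Zv ω) {x hv Pm Ps Pv η : ℝ} (hx : 0 ≤ x)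
    (hPm : 0 < Pm) (hPs : 0 < Ps) (hPv : 0 < Pv) (hη : 0 < η) :
    ({ω | √(Zv ω ^ 2 - hv ^ 2) ≤ x} ∩
        {ω | Pm * Zm ω ^ (-η) < Pv * Zv ω ^ (-η) ∧ Ps * Zs ω ^ (-η) < Pv * Zv ω ^ (-η)} : Set Ω)
      =ᵐ[μ] {ω | Zv ω ≤ √(x ^ 2 + hv ^ 2) ∧
        (Pm / Pv) ^ η⁻¹ * Zv ω < Zm ω ∧ (Ps / Pv) ^ η⁻¹ * Zv ω < Zs ω} := by
  refine Filter.eventuallyEq_set.2 ?_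
  filter_upwards [hZm, hZs, hZv] with ω hZm hZs hZv
  simp only [mem_inter_iff, mem_ofPred_eq, sqrt_sq_sub_sq_le_iff hZv.le hx,
    lt_mul_rpow_neg_iff hPm hPv hZv hZm hη, lt_mul_rpow_neg_iff hPs hPv hZv hZs hη]

variable [IsProbabilityMeasure μ]

lemma toReal_measure_le_and_lt_and_lt_eq_integral {Zm Zs Zv : Ω → ℝ} (hZm : Measurable Zm)
    (hZs : Measurable Zs) (hZv : Measurable Zv) (hind : iIndepFun ![Zm, Zs, Zv] μ)
    {lm ls lv hm hs hv : ℝ} (hlv : 0 < lv) (hhv : 0 ≤ hv)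
    (hZmccdf : ∀ x, μ {ω | x < Zm ω} = elevatedRayleighCcdf lm hm x)
    (hZsccdf : ∀ x, μ {ω | x < Zs ω} = elevatedRayleighCcdf ls hs x)
    (hZvccdf : ∀ x, μ {ω | x < Zv ω} = elevatedRayleighCcdf lv hv x)
    {a b R : ℝ} (ha : 0 ≤ a) (hb : 0 ≤ b) (hahv : hm ≤ a * hv) (hbhv : hs ≤ b * hv) (hR : hv ≤ R) :
    (μ {ω | Zv ω ≤ R ∧ a * Zv ω < Zm ω ∧ b * Zv ω < Zs ω}).toReal =
      ∫ z in hv..R, elevatedRayleighPdf lv hv z *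
        (exp (-(π * lm * ((a * z) ^ 2 - hm ^ 2))) * exp (-(π * ls * ((b * z) ^ 2 - hs ^ 2)))) := by
  set w := fun z => elevatedRayleighPdf lv hv z *
    (exp (-(π * lm * ((a * z) ^ 2 - hm ^ 2))) * exp (-(π * ls * ((b * z) ^ 2 - hs ^ 2))))
  have hpdf_nonneg : ∀ z ∈ Ioc hv R, 0 ≤ elevatedRayleighPdf lv hv z :=
    fun z hz => elevatedRayleighPdf_nonneg hlv.le hv (hhv.trans hz.1.le)
  have hw_nonneg : ∀ z ∈ Ioc hv R, 0 ≤ w z :=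
    fun z hz => mul_nonneg (hpdf_nonneg z hz) (by positivity)
  have hw_lintegrand : EqOn (fun z => ENNReal.ofReal (elevatedRayleighPdf lv hv z) *
      (μ {ω | a * z < Zm ω} * μ {ω | b * z < Zs ω})) (fun z => ENNReal.ofReal (w z)) (Ioc hv R) := by
    intro z hz
    have hm_le : ¬ a * z < hm := not_lt.2 (hahv.trans (mul_le_mul_of_nonneg_left hz.1.le ha))
    have hs_le : ¬ b * z < hs := not_lt.2 (hbhv.trans (mul_le_mul_of_nonneg_left hz.1.le hb))
    simp only [hZmccdf, hZsccdf, elevatedRayleighCcdf, if_neg hm_le, if_neg hs_le, w]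
    rw [← ENNReal.ofReal_mul (exp_pos _).le, ← ENNReal.ofReal_mul (hpdf_nonneg z hz)]
  have hccdf_meas : Measurable fun z => μ {ω | a * z < Zm ω} * μ {ω | b * z < Zs ω} :=
    (measurable_measure_const_mul_lt ha).mul (measurable_measure_const_mul_lt hb)
  have hevent : {ω | Zv ω ≤ R ∧ a * Zv ω < Zm ω ∧ b * Zv ω < Zs ω} =
      {ω | Zv ω ∈ Iic R ∧ a * Zv ω < Zm ω ∧ b * Zv ω < Zs ω} := rfl
  rw [hevent, measure_mem_and_lt_and_lt_eq_lintegral hZv hZm hZs hind measurableSet_Iic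
      (measurable_const_mul a) (measurable_const_mul b),
    map_eq_withDensity_of_ccdf hZv hlv hhv hZvccdf, withDensity_indicator measurableSet_Ioi,
    setLIntegral_withDensity_eq_setLIntegral_mul _
      (continuous_elevatedRayleighPdf lv hv).measurable.ennreal_ofReal hccdf_meas
      measurableSet_Iic, Measure.restrict_restrict measurableSet_Iic, inter_comm, Ioi_inter_Iic]
  simp only [Pi.mul_apply]
  rw [setLIntegral_congr_fun measurableSet_Ioc hw_lintegrand,
    ← ofReal_integral_eq_lintegral_ofReal, ENNReal.toReal_ofReal
      (setIntegral_nonneg measurableSet_Ioc hw_nonneg), intervalIntegral.integral_of_le hR]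
  · exact ((continuous_elevatedRayleighPdf lv hv).mul (by fun_prop)).integrableOn_Ioc
  · exact (ae_restrict_iff' measurableSet_Ioc).2 (.of_forall hw_nonneg)

end ThreeTier

theorem stmt6_general
    {Ω : Type*} [MeasureSpace Ω] [IsProbabilityMeasure (ℙ : Measure Ω)]
    (Zm Zs Zv : Ω → ℝ)
    (hZmMeas : Measurable Zm) (hZsMeas : Measurable Zs) (hZvMeas : Measurable Zv)
    (hIndep : iIndepFun ![Zm, Zs, Zv] ℙ)
    (lm ls lv hm hs hv Pm Ps Pv eta : ℝ)
    (hlm : 0 < lm) (hls : 0 < ls) (hlv : 0 < lv)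
    (hhm : 0 < hm) (hhs : 0 < hs) (hhv : 0 < hv)
    (hPm : 0 < Pm) (hPs : 0 < Ps) (hPv : 0 < Pv)
    (heta : 2 < eta)
    (Psm Pmv Psv : ℝ)
    (hPsm : Psm = (Ps / Pm) ^ (2 / eta))
    (hPmv : Pmv = (Pm / Pv) ^ (2 / eta))
    (hPsv : Psv = (Ps / Pv) ^ (2 / eta))
    (hZmCCDF : ∀ x : ℝ, ℙ {ω | Zm ω > x} =
      if x < hm then 1 else ENNReal.ofReal (Real.exp (-(π * lm * (x ^ 2 - hm ^ 2)))))
    (hZsCCDF : ∀ x : ℝ, ℙ {ω | Zs ω > x} =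
      if x < hs then 1 else ENNReal.ofReal (Real.exp (-(π * ls * (x ^ 2 - hs ^ 2)))))
    (hZvCCDF : ∀ x : ℝ, ℙ {ω | Zv ω > x} =
      if x < hv then 1 else ENNReal.ofReal (Real.exp (-(π * lv * (x ^ 2 - hv ^ 2)))))
    (hsm2 : hs ^ 2 ≤ Psm * hm ^ 2) (hmv2 : hm ^ 2 ≤ Pmv * hv ^ 2)
    (x : ℝ) (hx : 0 ≤ x) :
    (ℙ ({ω | Real.sqrt (Zv ω ^ 2 - hv ^ 2) ≤ x} ∩ {ω | Pv * Zv ω ^ (-eta) > Pm * Zm ω ^ (-eta) ∧ Pv * Zv ω ^ (-eta) > Ps * Zs ω ^ (-eta)})).toReal =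
      ∫ t in (0:ℝ)..x, 2 * π * lv * t *
        Real.exp (-(π * t ^ 2 * (lv + lm * Pmv + ls * Psv)) -
          π * lm * (hv ^ 2 * Pmv - hm ^ 2) - π * ls * (hv ^ 2 * Psv - hs ^ 2)) := by
  have hη : 0 < eta := by linarith
  have ha2 : ((Pm / Pv) ^ eta⁻¹) ^ 2 = Pmv := hPmv ▸ sq_rpow_inv (by positivity) eta
  have hb2 : ((Ps / Pv) ^ eta⁻¹) ^ 2 = Psv := hPsv ▸ sq_rpow_inv (by positivity) eta
  have hc : -(π * (lv + lm * Pmv + ls * Psv)) ≠ 0 := by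
    rw [← ha2, ← hb2]
    exact neg_ne_zero.2 (by positivity)
  simp only [gt_iff_lt]
  rw [measure_congr (sqrt_le_and_association_ae_eq
      ((ae_lt_of_ccdf hZmMeas hZmCCDF).mono fun _ => hhm.trans)
      ((ae_lt_of_ccdf hZsMeas hZsCCDF).mono fun _ => hhs.trans)
      ((ae_lt_of_ccdf hZvMeas hZvCCDF).mono fun _ => hhv.trans) hx hPm hPs hPv hη),
    toReal_measure_le_and_lt_and_lt_eq_integral hZmMeas hZsMeas hZvMeas hIndep hlv hhv.le
      hZmCCDF hZsCCDF hZvCCDF (by positivity) (by positivity)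
      (le_rpow_inv_mul_of_sq_le hhm.le hhv.le (by positivity) (hPmv ▸ hmv2))
      (le_rpow_inv_mul_of_sq_le hhs.le hhv.le (by positivity)
        (sq_le_div_rpow_mul_sq_trans hPs.le hPm hPv.le (hPsm ▸ hsm2) (hPmv ▸ hmv2)))
      (le_sqrt_of_sq_le (by nlinarith))]
  calc _ = ∫ z in hv..√(x ^ 2 + hv ^ 2), 2 * π * lv * z *
        exp (-(π * (lv + lm * Pmv + ls * Psv)) * z ^ 2 +
          π * (lv * hv ^ 2 + lm * hm ^ 2 + ls * hs ^ 2)) := by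
        refine intervalIntegral.integral_congr fun z _ => ?_
        simp only [elevatedRayleighPdf, mul_pow, ha2, hb2, mul_assoc, ← exp_add]
        ring_nf
    _ = _ := integral_mul_exp_quadratic_sqrt _ _ _ _ _ hc
    _ = _ := intervalIntegral.integral_congr fun t _ => by ring_nf

theorem stmt6
    {Ω : Type*} [MeasureSpace Ω] [IsProbabilityMeasure (ℙ : Measure Ω)]
    (Zm Zs Zv : Ω → ℝ)
    (hZmMeas : Measurable Zm) (hZsMeas : Measurable Zs) (hZvMeas : Measurable Zv)
    (hIndep : iIndepFun ![Zm, Zs, Zv] ℙ)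
    (lm ls lv hm hs hv Pm Ps Pv eta : ℝ)
    (hlm : 0 < lm) (hls : 0 < ls) (hlv : 0 < lv)
    (hhm : 0 < hm) (hhs : 0 < hs) (hhv : 0 < hv)
    (hPm : 0 < Pm) (hPs : 0 < Ps) (hPv : 0 < Pv)
    (heta : 2 < eta)
    (Psm Pms Pmv Pvm Psv Pvs : ℝ)
    (hPsm : Psm = (Ps / Pm) ^ (2 / eta)) (hPms : Pms = (Pm / Ps) ^ (2 / eta))
    (hPmv : Pmv = (Pm / Pv) ^ (2 / eta)) (hPvm : Pvm = (Pv / Pm) ^ (2 / eta))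
    (hPsv : Psv = (Ps / Pv) ^ (2 / eta)) (hPvs : Pvs = (Pv / Ps) ^ (2 / eta))
    (hZmCCDF : ∀ x : ℝ, ℙ {ω | Zm ω > x} =
      if x < hm then 1 else ENNReal.ofReal (Real.exp (-(π * lm * (x ^ 2 - hm ^ 2)))))
    (hZsCCDF : ∀ x : ℝ, ℙ {ω | Zs ω > x} =
      if x < hs then 1 else ENNReal.ofReal (Real.exp (-(π * ls * (x ^ 2 - hs ^ 2)))))
    (hZvCCDF : ∀ x : ℝ, ℙ {ω | Zv ω > x} =
      if x < hv then 1 else ENNReal.ofReal (Real.exp (-(π * lv * (x ^ 2 - hv ^ 2)))))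
    (hsm : hs < hm) (hmv : hm < hv)
    (hsm2 : hs ^ 2 ≤ Psm * hm ^ 2) (hmv2 : hm ^ 2 ≤ Pmv * hv ^ 2)
    (x : ℝ) (hx : 0 ≤ x) :
    (ℙ ({ω | Real.sqrt (Zv ω ^ 2 - hv ^ 2) ≤ x} ∩ {ω | Pv * Zv ω ^ (-eta) > Pm * Zm ω ^ (-eta) ∧ Pv * Zv ω ^ (-eta) > Ps * Zs ω ^ (-eta)})).toReal =
      ∫ t in (0:ℝ)..x, 2 * π * lv * t *
        Real.exp (-(π * t ^ 2 * (lv + lm * Pmv + ls * Psv)) -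
          π * lm * (hv ^ 2 * Pmv - hm ^ 2) - π * ls * (hv ^ 2 * Psv - hs ^ 2)) :=
  stmt6_general Zm Zs Zv hZmMeas hZsMeas hZvMeas hIndep lm ls lv hm hs hv Pm Ps Pv eta hlm hls hlv
    hhm hhs hhv hPm hPs hPv heta Psm Pmv Psv hPsm hPmv hPsv hZmCCDF hZsCCDF hZvCCDF hsm2 hmv2 x hx
end

section
/- Let η > 2, T ≥ 0, λ > 0 and z > 0 be real numbers. Then the improper integral ∫_z^∞ (T·z^η / (r^η + T·z^η)) · 2π·λ·r dr converges and equals (2π·λ·T·z²/η) · ∫₀¹ u^(−2/η)/(1 + T·u) du; in particular, this quantity equals (2π·λ·T·z²/(η−2)) · ₂F₁(1, 1 − 2/η; 2 − 2/η; −T), where ₂F₁ is the Gauss hypergeometric function expressed through its Euler integral representation ₂F₁(1, 1−2/η; 2−2/η; −T) = (1 − 2/η)·∫₀¹ u^(−2/η)/(1 + T·u) du. -/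
open MeasureTheory Real

/-!
Substituting `r = z u^(-1/η)` maps `u ∈ (0, 1)` bijectively onto `r ∈ (z, ∞)`, turns
`r^η + T z^η` into `z^η (1 + T u) / u`, and the Jacobian `(z/η) u^(-1/η - 1)` combines with the
factor `r` into `(z²/η) u^(-2/η) / u`. The resulting integrand on `(0, 1)` is dominated by the
integrable `u^(-2/η)` because `η > 2`. The hypergeometric form is the same number rewritten
with `(1 - 2/η) / (η - 2) = 1/η`.
-/

section ConstMulRpow

variable {E : Type*} [NormedAddCommGroup E] [NormedSpace ℝ E] {z a : ℝ}

lemma image_const_mul_rpow_Ioo_of_neg (hz : 0 < z) (ha : a < 0) :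
    (fun u : ℝ => z * u ^ a) '' Set.Ioo 0 1 = Set.Ioi z := by
  ext r
  constructor
  · rintro ⟨u, ⟨hu0, hu1⟩, rfl⟩
    have : 1 < u ^ a := one_lt_rpow_of_pos_of_lt_one_of_neg hu0 hu1 ha
    show z < z * u ^ a
    nlinarith
  · intro (hr : z < r)
    have hrz : 1 < r / z := (one_lt_div hz).2 hr
    refine ⟨(r / z) ^ a⁻¹,
      ⟨by positivity, rpow_lt_one_of_one_lt_of_neg hrz (inv_lt_zero.2 ha)⟩, ?_⟩
    show z * ((r / z) ^ a⁻¹) ^ a = r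
    rw [rpow_inv_rpow (by positivity) ha.ne]
    field_simp

lemma injOn_const_mul_rpow (hz : z ≠ 0) (ha : a ≠ 0) :
    Set.InjOn (fun u : ℝ => z * u ^ a) (Set.Ioo 0 1) := fun _ hu _ hv huv =>
  rpow_left_injOn ha hu.1.le hv.1.le (mul_left_cancel₀ hz huv)

lemma hasDerivWithinAt_const_mul_rpow {s : Set ℝ} {u : ℝ} (hu : u ≠ 0) :
    HasDerivWithinAt (fun u : ℝ => z * u ^ a) (z * (a * u ^ (a - 1))) s u :=
  ((hasDerivAt_rpow_const (Or.inl hu)).const_mul z).hasDerivWithinAt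

lemma integrableOn_Ioi_iff_comp_const_mul_rpow (hz : 0 < z) (ha : a < 0) (f : ℝ → E) :
    IntegrableOn f (Set.Ioi z) ↔
      IntegrableOn (fun u => |z * (a * u ^ (a - 1))| • f (z * u ^ a)) (Set.Ioo 0 1) := by
  rw [← image_const_mul_rpow_Ioo_of_neg hz ha]
  exact integrableOn_image_iff_integrableOn_abs_deriv_smul measurableSet_Ioo
    (fun u hu => hasDerivWithinAt_const_mul_rpow hu.1.ne') (injOn_const_mul_rpow hz.ne' ha.ne) f

lemma integral_Ioi_eq_integral_comp_const_mul_rpow (hz : 0 < z) (ha : a < 0) (f : ℝ → E) :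
    ∫ r in Set.Ioi z, f r = ∫ u in Set.Ioo 0 1, |z * (a * u ^ (a - 1))| • f (z * u ^ a) := by
  rw [← image_const_mul_rpow_Ioo_of_neg hz ha]
  exact integral_image_eq_integral_abs_deriv_smul measurableSet_Ioo
    (fun u hu => hasDerivWithinAt_const_mul_rpow hu.1.ne') (injOn_const_mul_rpow hz.ne' ha.ne) f

end ConstMulRpow

lemma integrableOn_rpow_div_one_add_mul_Ioo {s T : ℝ} (hs : -1 < s) (hT : 0 ≤ T) :
    IntegrableOn (fun u : ℝ => u ^ s / (1 + T * u)) (Set.Ioo 0 1) := by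
  have hrpow : IntegrableOn (fun u : ℝ => u ^ s) (Set.Icc 0 1) :=
    (intervalIntegrable_iff_integrableOn_Icc_of_le zero_le_one).1
      (intervalIntegral.intervalIntegrable_rpow' hs)
  have hinv : ContinuousOn (fun u : ℝ => (1 + T * u)⁻¹) (Set.Icc 0 1) :=
    ContinuousOn.inv₀ (by fun_prop) fun u hu => by nlinarith [hu.1]
  exact (hrpow.mul_continuousOn hinv isCompact_Icc).mono_set Set.Ioo_subset_Icc_self

lemma abs_jacobian_mul_interference_integrand_eq {eta T lam z u : ℝ} (heta : 0 < eta)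
    (hT : 0 ≤ T) (hz : 0 < z) (hu : 0 < u) :
    |z * (-(1 / eta) * u ^ (-(1 / eta) - 1))| *
        (T * z ^ eta / ((z * u ^ (-(1 / eta))) ^ eta + T * z ^ eta) *
          (2 * π * lam * (z * u ^ (-(1 / eta))))) =
      2 * π * lam * T * z ^ 2 / eta * (u ^ (-(2 / eta)) / (1 + T * u)) := by
  have hv : 0 < u ^ (-(1 / eta)) := rpow_pos_of_pos hu _
  have hpow : (z * u ^ (-(1 / eta))) ^ eta = z ^ eta / u := by
    rw [mul_rpow hz.le hv.le, ← rpow_mul hu.le, neg_mul, one_div_mul_cancel heta.ne',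
      rpow_neg_one, div_eq_mul_inv]
  have hsub : u ^ (-(1 / eta) - 1) = u ^ (-(1 / eta)) / u := by
    rw [rpow_sub hu, rpow_one]
  have hsq : u ^ (-(2 / eta)) = u ^ (-(1 / eta)) * u ^ (-(1 / eta)) := by
    rw [← rpow_add hu]; ring_nf
  have hjac : |z * (-(1 / eta) * u ^ (-(1 / eta) - 1))| = z / eta * (u ^ (-(1 / eta)) / u) := by
    rw [hsub, abs_of_nonpos (by rw [neg_mul, mul_neg]; exact neg_nonpos.2 (by positivity))]
    ring
  have hzeta : 0 < z ^ eta := rpow_pos_of_pos hz eta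
  have hden : 0 < 1 + T * u := by nlinarith
  rw [hjac, hpow, hsq]
  field_simp

theorem stmt8_general
    (eta T lam z : ℝ)
    (heta : 2 < eta) (hT : 0 ≤ T) (hz : 0 < z) :
    MeasureTheory.IntegrableOn
        (fun r : ℝ => T * z ^ eta / (r ^ eta + T * z ^ eta) * (2 * π * lam * r))
        (Set.Ioi z) ∧
      (∫ r in Set.Ioi z, T * z ^ eta / (r ^ eta + T * z ^ eta) * (2 * π * lam * r)) =
        2 * π * lam * T * z ^ 2 / eta * ∫ u in (0:ℝ)..1, u ^ (-(2 / eta)) / (1 + T * u) ∧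
      (∫ r in Set.Ioi z, T * z ^ eta / (r ^ eta + T * z ^ eta) * (2 * π * lam * r)) =
        2 * π * lam * T * z ^ 2 / (eta - 2) *
          ((1 - 2 / eta) * ∫ u in (0:ℝ)..1, u ^ (-(2 / eta)) / (1 + T * u)) := by
  have heta0 : 0 < eta := by linarith
  have ha : -(1 / eta) < 0 := neg_neg_of_pos (one_div_pos.2 heta0)
  have hexp : -1 < -(2 / eta) := by
    have : 2 / eta < 1 := (div_lt_one heta0).2 heta
    linarith
  set F : ℝ → ℝ := fun r => T * z ^ eta / (r ^ eta + T * z ^ eta) * (2 * π * lam * r)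
  have hpullback : Set.EqOn
      (fun u => |z * (-(1 / eta) * u ^ (-(1 / eta) - 1))| • F (z * u ^ (-(1 / eta))))
      (fun u => 2 * π * lam * T * z ^ 2 / eta * (u ^ (-(2 / eta)) / (1 + T * u))) (Set.Ioo 0 1) :=
    fun u hu => abs_jacobian_mul_interference_integrand_eq heta0 hT hz hu.1
  have hval : ∫ r in Set.Ioi z, F r =
      2 * π * lam * T * z ^ 2 / eta * ∫ u in (0:ℝ)..1, u ^ (-(2 / eta)) / (1 + T * u) := by
    rw [integral_Ioi_eq_integral_comp_const_mul_rpow hz ha,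
      setIntegral_congr_fun measurableSet_Ioo hpullback, integral_const_mul,
      intervalIntegral.integral_of_le zero_le_one, integral_Ioc_eq_integral_Ioo]
  refine ⟨(integrableOn_Ioi_iff_comp_const_mul_rpow hz ha F).2 ?_, hval, ?_⟩
  · exact IntegrableOn.congr_fun ((integrableOn_rpow_div_one_add_mul_Ioo hexp hT).const_mul _)
      hpullback.symm measurableSet_Ioo
  · rw [hval]
    have : eta - 2 ≠ 0 := by linarith
    field_simp

theorem stmt8
    (eta T lam z : ℝ)
    (heta : 2 < eta) (hT : 0 ≤ T) (hlam : 0 < lam) (hz : 0 < z) :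
    MeasureTheory.IntegrableOn
        (fun r : ℝ => T * z ^ eta / (r ^ eta + T * z ^ eta) * (2 * π * lam * r))
        (Set.Ioi z) ∧
      (∫ r in Set.Ioi z, T * z ^ eta / (r ^ eta + T * z ^ eta) * (2 * π * lam * r)) =
        2 * π * lam * T * z ^ 2 / eta * ∫ u in (0:ℝ)..1, u ^ (-(2 / eta)) / (1 + T * u) ∧
      (∫ r in Set.Ioi z, T * z ^ eta / (r ^ eta + T * z ^ eta) * (2 * π * lam * r)) =
        2 * π * lam * T * z ^ 2 / (eta - 2) *
          ((1 - 2 / eta) * ∫ u in (0:ℝ)..1, u ^ (-(2 / eta)) / (1 + T * u)) :=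
  stmt8_general eta T lam z heta hT hz
end
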